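/- arXiv:1502.02624 — 6 statements merged into one kernel-verified Lean document; each statement's English description precedes it below -/
import Mathlib

section
/- Let s, t, ℓ, q, r be integers with 1 ≤ t ≤ s < ℓ, q ≥ 1, 1 ≤ r ≤ s and ℓ = q·s + r. Let φ be an irreducible (i.e. injective) support map of length ℓ with t jumps. Then the sum |φ| = ∑_{i ∈ ℤ/ℓℤ} φ(i) satisfies 4·|φ| ≥ 2s(s+1) + 2(2^{q−1} − 1)(3s² + s) + 2^{q}·r(2s + r + 1) (equivalently, |φ| ≥ s(s+1)/2 + (2^{q−1}−1)(3s²+s)/2 + 2^{q−2} r(2s+r+1) as rational numbers). -/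
section SupportMapAux

lemma gauss_aux (c k : ℕ) :
    2 * ∑ i ∈ Finset.range k, (c + i + 1) = k * (2 * c + k + 1) := by
  induction k with
  | zero => simp
  | succ k ih => rw [Finset.sum_range_succ, Nat.mul_add, ih]; ring

def Lb (s n : ℕ) : ℕ :=
  if n < s then n + 1 else 2 ^ (n / s - 1) * (s + n % s + 1)

lemma Lb_lt (s n : ℕ) (h : n < s) : Lb s n = n + 1 := if_pos h

lemma Lb_block (s j k : ℕ) (hj : 1 ≤ j) (hk : k < s) :
    Lb s (j * s + k) = 2 ^ (j - 1) * (s + k + 1) := by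
  have hs : s ≤ j * s := Nat.le_mul_of_pos_left s hj
  have h1 : ¬ j * s + k < s := by omega
  have hs0 : 0 < s := by omega
  rw [Lb, if_neg h1, mul_comm j s, Nat.mul_add_div hs0, Nat.mul_add_mod,
    Nat.div_eq_of_lt hk, Nat.mod_eq_of_lt hk, Nat.add_zero]

lemma sum_Lb (s r : ℕ) (hs : 1 ≤ s) (hr1 : 1 ≤ r) (hrs : r ≤ s) :
    ∀ q, 1 ≤ q →
    4 * ∑ n ∈ Finset.range (q * s + r), Lb s n
      = 2 * s * (s + 1) + 2 * (2 ^ (q - 1) - 1) * (3 * s ^ 2 + s)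
        + 2 ^ q * (r * (2 * s + r + 1)) := by
  intro q hq
  induction q, hq using Nat.le_induction with
  | base =>
    rw [one_mul, Finset.sum_range_add]
    have e1 : ∑ n ∈ Finset.range s, Lb s n = ∑ n ∈ Finset.range s, (0 + n + 1) :=
      Finset.sum_congr rfl fun n hn => by
        rw [Lb_lt s n (Finset.mem_range.mp hn), Nat.zero_add]
    have e2 : ∑ i ∈ Finset.range r, Lb s (s + i) = ∑ i ∈ Finset.range r, (s + i + 1) :=
      Finset.sum_congr rfl fun i hi => by
        have h := Lb_block s 1 i le_rfl (lt_of_lt_of_le (Finset.mem_range.mp hi) hrs)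
        simpa using h
    rw [e1, e2]
    have g1 := gauss_aux 0 s
    have g2 := gauss_aux s r
    simp only [pow_one, pow_zero, Nat.sub_self, Nat.mul_zero, Nat.zero_mul, Nat.add_zero]
    nlinarith [g1, g2]
  | succ q hq1 ih =>
    have hsplit : (q + 1) * s + r = (q * s + r) + ((s - r) + r) := by
      have h : (q + 1) * s = q * s + s := by ring
      omega
    rw [hsplit, Finset.sum_range_add (fun n => Lb s n) (q * s + r) ((s - r) + r),
      Finset.sum_range_add (fun i => Lb s (q * s + r + i)) (s - r) r]
    have e3 : ∑ i ∈ Finset.range (s - r), Lb s (q * s + r + i)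
        = ∑ i ∈ Finset.range (s - r), 2 ^ (q - 1) * (s + r + i + 1) :=
      Finset.sum_congr rfl fun i hi => by
        have hi' : r + i < s := by have := Finset.mem_range.mp hi; omega
        have h1 : q * s + r + i = q * s + (r + i) := by ring
        rw [h1, Lb_block s q (r + i) hq1 hi']
        ring_nf
    have e4 : ∑ i ∈ Finset.range r, Lb s (q * s + r + (s - r + i))
        = ∑ i ∈ Finset.range r, 2 ^ q * (s + i + 1) :=
      Finset.sum_congr rfl fun i hi => by
        have hi' : i < s := lt_of_lt_of_le (Finset.mem_range.mp hi) hrs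
        have h1 : q * s + r + (s - r + i) = (q + 1) * s + i := by
          have : (q + 1) * s = q * s + s := by ring
          omega
        rw [h1, Lb_block s (q + 1) i (by omega) hi', Nat.add_sub_cancel]
    rw [e3, e4, ← Finset.mul_sum, ← Finset.mul_sum]
    set SA := ∑ i ∈ Finset.range (s - r), (s + r + i + 1) with hSA
    set SB := ∑ i ∈ Finset.range r, (s + i + 1) with hSB
    have g3 : 2 * SA = (s - r) * (2 * (s + r) + (s - r) + 1) := gauss_aux (s + r) (s - r)
    have g4 : 2 * SB = r * (2 * s + r + 1) := gauss_aux s r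
    have hq2 : 1 ≤ 2 ^ (q - 1) := Nat.one_le_two_pow
    have hq3 : 1 ≤ 2 ^ q := Nat.one_le_two_pow
    simp only [Nat.add_sub_cancel]
    zify [hq2, hq3, hrs] at ih g3 g4 ⊢
    have h2 : ((2 : ℤ)) ^ q = 2 * 2 ^ (q - 1) := by
      rw [mul_comm, ← pow_succ]; congr 1; omega
    have h3 : ((2 : ℤ)) ^ (q + 1) = 2 * 2 ^ q := by rw [mul_comm, ← pow_succ]
    linear_combination ih + 2 * ((2:ℤ) ^ (q - 1)) * g3 + 2 * ((2:ℤ) ^ q) * g4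
      - ((r:ℤ) * (2*(s:ℤ)+(r:ℤ)+1)) * h3
      + ((r:ℤ) * (2*(s:ℤ)+(r:ℤ)+1) - 2*(3*(s:ℤ)^2+(s:ℤ))) * h2

end SupportMapAux

/-- A support map of length `ℓ` is encoded as an `ℓ`-periodic map `φ : ℕ → ℕ` with
positive values; its jumps are recorded by a subset `J ⊆ {0, …, ℓ-1}`: at indices of `J`
we have `φ(i+1) < 2·φ(i)`, elsewhere `φ(i+1) = 2·φ(i)`.  Irreducibility means
injectivity on `ℤ/ℓℤ`, i.e. on `{0, …, ℓ-1}`.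

If `φ` is an irreducible support map of length `ℓ` with `t` jumps, `1 ≤ t ≤ s < ℓ`,
and `ℓ = q·s + r` with `q ≥ 1`, `1 ≤ r ≤ s`, then
`4·|φ| ≥ 2s(s+1) + 2(2^{q-1} - 1)(3s² + s) + 2^q·r(2s + r + 1)`. -/
theorem support_map_sum_lower_bound
    (s t ℓ q r : ℕ) (ht : 1 ≤ t) (hts : t ≤ s) (hsl : s < ℓ)
    (hq : 1 ≤ q) (hr1 : 1 ≤ r) (hrs : r ≤ s) (hl : ℓ = q * s + r)
    (φ : ℕ → ℕ)
    (hper : ∀ i, φ (i + ℓ) = φ i)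
    (hpos : ∀ i, 0 < φ i)
    (J : Finset ℕ) (hJ : J ⊆ Finset.range ℓ) (hJcard : J.card = t)
    (hjump : ∀ i ∈ Finset.range ℓ,
      (i ∈ J → φ (i + 1) < 2 * φ i) ∧ (i ∉ J → φ (i + 1) = 2 * φ i))
    (hinj : Set.InjOn φ ↑(Finset.range ℓ)) :
    2 * s * (s + 1) + 2 * (2 ^ (q - 1) - 1) * (3 * s ^ 2 + s)
        + 2 ^ q * (r * (2 * s + r + 1))
      ≤ 4 * ∑ i ∈ Finset.range ℓ, φ i := by
  classical
  have hs1 : 1 ≤ s := le_trans ht hts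
  have hl0 : 0 < ℓ := lt_of_le_of_lt (Nat.zero_le s) hsl
  set S : Finset ℕ := (Finset.range ℓ).image φ with hS
  have hScard : S.card = ℓ := by
    rw [hS, Finset.card_image_of_injOn hinj, Finset.card_range]
  set a : Fin ℓ ↪o ℕ := S.orderEmbOfFin hScard with ha
  have hamem : ∀ k, a k ∈ S := fun k => S.orderEmbOfFin_mem hScard k
  have hamono : StrictMono a := (S.orderEmbOfFin hScard).strictMono
  have hrange : ∀ v ∈ S, ∃ k, a k = v := by
    intro v hv
    have h := S.range_orderEmbOfFin hScard
    have : v ∈ Set.range (S.orderEmbOfFin hScard) := by rw [h]; exact_mod_cast hv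
    obtain ⟨k, hk⟩ := this
    exact ⟨k, hk⟩
  have hSpos : ∀ v ∈ S, 0 < v := by
    intro v hv
    obtain ⟨m, _, rfl⟩ := Finset.mem_image.mp hv
    exact hpos m
  -- root elements
  set R : Finset ℕ := S.filter (fun v => ¬ ∃ u ∈ S, 2 * u = v) with hR
  have hRcard : R.card ≤ s := by
    have hsub : R ⊆ J.image (fun i => φ (i + 1)) := by
      intro v hv
      rw [hR, Finset.mem_filter] at hv
      obtain ⟨hv1, hv2⟩ := hv
      obtain ⟨m, hm, rfl⟩ := Finset.mem_image.mp hv1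
      have hm' := Finset.mem_range.mp hm
      set i := if m = 0 then ℓ - 1 else m - 1 with hi
      have hiℓ : i < ℓ := by rw [hi]; split <;> omega
      have hφ : φ (i + 1) = φ m := by
        rw [hi]
        by_cases h0 : m = 0
        · rw [if_pos h0, h0]
          have h1 : ℓ - 1 + 1 = ℓ := by omega
          rw [h1]
          have := hper 0
          rwa [Nat.zero_add] at this
        · rw [if_neg h0]
          congr 1
          omega
      have hiJ : i ∈ J := by
        by_contra hiJ
        have h2 := (hjump i (Finset.mem_range.mpr hiℓ)).2 hiJ
        exact hv2 ⟨φ i, Finset.mem_image.mpr ⟨i, Finset.mem_range.mpr hiℓ, rfl⟩,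
          by rw [← h2, hφ]⟩
      exact Finset.mem_image.mpr ⟨i, hiJ, hφ⟩
    calc R.card ≤ (J.image (fun i => φ (i + 1))).card := Finset.card_le_card hsub
      _ ≤ J.card := Finset.card_image_le
      _ = t := hJcard
      _ ≤ s := hts
  -- base bound
  have hbase : ∀ n, ∀ h : n < ℓ, n + 1 ≤ a ⟨n, h⟩ := by
    intro n
    induction n with
    | zero => intro h; exact hSpos _ (hamem _)
    | succ n ih =>
      intro h
      have h' : n < ℓ := by omega
      have hlt : a ⟨n, h'⟩ < a ⟨n + 1, h⟩ := hamono (by simp [Fin.lt_def])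
      have := ih h'
      omega
  -- doubling bound
  have hdouble : ∀ m, ∀ h2 : m < ℓ, ∀ h : m + s < ℓ,
      2 * a ⟨m, h2⟩ ≤ a ⟨m + s, h⟩ := by
    intro m h2 h
    by_contra hc
    push_neg at hc
    set c := a ⟨m + s, h⟩ with hcc
    have hD : m + s + 1 ≤ (S.filter (fun v => v ≤ c)).card := by
      have hsub : (Finset.Iic (⟨m + s, h⟩ : Fin ℓ)).image a ⊆ S.filter (fun v => v ≤ c) := by
        intro v hv
        obtain ⟨k, hk, rfl⟩ := Finset.mem_image.mp hv
        exact Finset.mem_filter.mpr ⟨hamem k, hamono.monotone (Finset.mem_Iic.mp hk)⟩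
      have hcardim : ((Finset.Iic (⟨m + s, h⟩ : Fin ℓ)).image a).card = m + s + 1 := by
        rw [Finset.card_image_of_injective _ hamono.injective, Fin.card_Iic]
      have := Finset.card_le_card hsub
      omega
    have hE : m + 1 ≤ (S.filter (fun u => 2 * u ≤ c)).card := by
      have hsd := Finset.le_card_sdiff R (S.filter (fun v => v ≤ c))
      have hH : m + 1 ≤ ((S.filter (fun v => v ≤ c)) \ R).card := by omega
      have hmaps : ∀ v ∈ (S.filter (fun v => v ≤ c)) \ R,
          v / 2 ∈ S.filter (fun u => 2 * u ≤ c) := by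
        intro v hv
        obtain ⟨hv1, hv2⟩ := Finset.mem_sdiff.mp hv
        obtain ⟨hvS, hvc⟩ := Finset.mem_filter.mp hv1
        have hch : ∃ u ∈ S, 2 * u = v := by
          by_contra hcon
          exact hv2 (Finset.mem_filter.mpr ⟨hvS, hcon⟩)
        obtain ⟨u, huS, huv⟩ := hch
        have : v / 2 = u := by omega
        rw [this]
        exact Finset.mem_filter.mpr ⟨huS, by omega⟩
      have hinj2 : Set.InjOn (· / 2) ↑((S.filter (fun v => v ≤ c)) \ R) := by
        intro v hv w hw hvw
        simp only [Finset.coe_sdiff, Set.mem_diff, Finset.mem_coe, Finset.mem_filter] at hv hw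
        obtain ⟨⟨hvS, hvc⟩, hv2⟩ := hv
        obtain ⟨⟨hwS, hwc⟩, hw2⟩ := hw
        have hch1 : ∃ u ∈ S, 2 * u = v := by
          by_contra hcon
          exact hv2 (Finset.mem_filter.mpr ⟨hvS, hcon⟩)
        have hch2 : ∃ u ∈ S, 2 * u = w := by
          by_contra hcon
          exact hw2 (Finset.mem_filter.mpr ⟨hwS, hcon⟩)
        obtain ⟨u1, _, hu1⟩ := hch1
        obtain ⟨u2, _, hu2⟩ := hch2
        simp only at hvw
        omega
      have := Finset.card_le_card_of_injOn (· / 2) hmaps hinj2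
      omega
    have hE2 : (S.filter (fun u => 2 * u ≤ c)).card ≤ m := by
      have hsub : S.filter (fun u => 2 * u ≤ c) ⊆ (Finset.Iio (⟨m, h2⟩ : Fin ℓ)).image a := by
        intro u hu
        obtain ⟨hu1, hu2⟩ := Finset.mem_filter.mp hu
        obtain ⟨k, rfl⟩ := hrange u hu1
        refine Finset.mem_image.mpr ⟨k, Finset.mem_Iio.mpr ?_, rfl⟩
        have hlt : a k < a ⟨m, h2⟩ := by omega
        exact hamono.lt_iff_lt.mp hlt
      have h1 := Finset.card_le_card hsub
      have h2' : ((Finset.Iio (⟨m, h2⟩ : Fin ℓ)).image a).card = m := by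
        rw [Finset.card_image_of_injective _ hamono.injective, Fin.card_Iio]
      omega
    omega
  -- key block bound
  have hkey : ∀ j, ∀ k n, 1 ≤ j → k < s → n = j * s + k → ∀ h : n < ℓ,
      2 ^ (j - 1) * (s + k + 1) ≤ a ⟨n, h⟩ := by
    intro j
    induction j with
    | zero => intro k n hj; omega
    | succ j ih =>
      intro k n hj hk hn h
      by_cases hj0 : j = 0
      · subst hj0
        have hn' : n = s + k := by omega
        have := hbase n h
        simpa using by omega
      · have hj1 : 1 ≤ j := by omega
        have hns : n = (j * s + k) + s := by
          have : (j + 1) * s = j * s + s := by ring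
          omega
        have hn1 : j * s + k < ℓ := by omega
        subst hns
        have hd := hdouble (j * s + k) hn1 h
        have hih := ih k (j * s + k) hj1 hk rfl hn1
        have hpow : (2:ℕ) ^ (j + 1 - 1) = 2 * 2 ^ (j - 1) := by
          rw [Nat.add_sub_cancel, mul_comm, ← pow_succ]
          congr 1
          omega
        calc 2 ^ (j + 1 - 1) * (s + k + 1) = 2 * (2 ^ (j - 1) * (s + k + 1)) := by
              rw [hpow]; ring
          _ ≤ 2 * a ⟨j * s + k, hn1⟩ := Nat.mul_le_mul_left 2 hih
          _ ≤ a ⟨j * s + k + s, h⟩ := hd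
  -- sums
  have hsum1 : ∑ v ∈ S, v = ∑ i ∈ Finset.range ℓ, φ i := by
    rw [hS]
    exact Finset.sum_image fun x hx y hy hxy =>
      hinj (Finset.mem_coe.mpr hx) (Finset.mem_coe.mpr hy) hxy
  have hsum2 : ∑ k : Fin ℓ, a k = ∑ v ∈ S, v := by
    refine Finset.sum_bij (fun k _ => a k) (fun k _ => hamem k) ?_ ?_ (fun k _ => rfl)
    · intro k _ l _ hkl
      exact hamono.injective hkl
    · intro v hv
      obtain ⟨k, hk⟩ := hrange v hv
      exact ⟨k, Finset.mem_univ k, hk⟩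
  have hA : ∑ n ∈ Finset.range ℓ, (if h : n < ℓ then a ⟨n, h⟩ else 0) = ∑ k : Fin ℓ, a k := by
    rw [Finset.sum_range]
    exact Finset.sum_congr rfl fun k _ => by rw [dif_pos k.isLt]
  have hpt : ∀ n ∈ Finset.range ℓ, Lb s n ≤ (if h : n < ℓ then a ⟨n, h⟩ else 0) := by
    intro n hn
    have h : n < ℓ := Finset.mem_range.mp hn
    rw [dif_pos h]
    by_cases hns : n < s
    · rw [Lb_lt s n hns]
      exact hbase n h
    · have hs0 : 0 < s := hs1
      have hk : n % s < s := Nat.mod_lt n hs0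
      have hj : 1 ≤ n / s := (Nat.one_le_div_iff hs0).mpr (by omega)
      have hnd : n = (n / s) * s + n % s := by
        rw [mul_comm]
        exact (Nat.div_add_mod n s).symm
      have hLb : Lb s n = 2 ^ (n / s - 1) * (s + n % s + 1) := by
        rw [Lb, if_neg hns]
      rw [hLb]
      exact hkey (n / s) (n % s) n hj hk hnd h
  have hfinal : ∑ n ∈ Finset.range ℓ, Lb s n ≤ ∑ i ∈ Finset.range ℓ, φ i := by
    rw [← hsum1, ← hsum2, ← hA]
    exact Finset.sum_le_sum hpt
  have hLbsum := sum_Lb s r hs1 hr1 hrs q hq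
  calc 2 * s * (s + 1) + 2 * (2 ^ (q - 1) - 1) * (3 * s ^ 2 + s)
        + 2 ^ q * (r * (2 * s + r + 1))
      = 4 * ∑ n ∈ Finset.range (q * s + r), Lb s n := hLbsum.symm
    _ = 4 * ∑ n ∈ Finset.range ℓ, Lb s n := by rw [← hl]
    _ ≤ 4 * ∑ i ∈ Finset.range ℓ, φ i := Nat.mul_le_mul_left 4 hfinal
end

section
/- Let n ≥ 18 and D = {i : 1 ≤ i ≤ 2^{n+1} − 3, i odd}. Let U be an irreducible solution of length ℓ and weight w for D whose density lies in [1/n, 1/(n−1)], i.e. (n−1)·w ≤ ℓ ≤ n·w. Then the support φ_U has exactly w jumps, i.e. there are exactly w values k ∈ ℤ/ℓℤ with φ_U(k+1) < 2φ_U(k). -/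
/-- The binary weight `s₂(m)`: the sum of the base-2 digits of `m`. -/
def s2 (m : ℕ) : ℕ := (Nat.digits 2 m).sum

/-- The shift map on `{0, …, 2^ℓ - 1}`: it fixes `2^ℓ - 1` and sends any other `i`
to the remainder of `2·i` modulo `2^ℓ - 1`. -/
def shift2 (ℓ i : ℕ) : ℕ := if i = 2 ^ ℓ - 1 then i else (2 * i) % (2 ^ ℓ - 1)

/-- `U : ℕ → ℕ` (supported on `D`) is a solution of length `ℓ` for `D`:
`0 ≤ u_d ≤ 2^ℓ - 1` and `∑ d·u_d` is a positive multiple of `2^ℓ - 1`. -/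
structure IsSolution (D : Finset ℕ) (ℓ : ℕ) (U : ℕ → ℕ) : Prop where
  len_pos : 1 ≤ ℓ
  bounded : ∀ d, U d ≤ 2 ^ ℓ - 1
  supp_sub : ∀ d, d ∉ D → U d = 0
  dvd : (2 ^ ℓ - 1) ∣ ∑ d ∈ D, d * U d
  pos : 0 < ∑ d ∈ D, d * U d

/-- The weight `s(U) = ∑_{d ∈ D} s₂(u_d)` of a solution. -/
def weight (D : Finset ℕ) (U : ℕ → ℕ) : ℕ := ∑ d ∈ D, s2 (U d)

/-- The support map `φ_U(k) = (∑_{d ∈ D} d·δ^k(u_d)) / (2^ℓ - 1)` of a solution,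
viewed as an `ℓ`-periodic function on `ℕ`. -/
def supportMap (D : Finset ℕ) (ℓ : ℕ) (U : ℕ → ℕ) (k : ℕ) : ℕ :=
  (∑ d ∈ D, d * (shift2 ℓ)^[k] (U d)) / (2 ^ ℓ - 1)

/-- A solution is irreducible when its support map is injective on `ℤ/ℓℤ`,
i.e. injective on `{0, …, ℓ-1}`. -/
def IrreducibleSol (D : Finset ℕ) (ℓ : ℕ) (U : ℕ → ℕ) : Prop :=
  Set.InjOn (supportMap D ℓ U) ↑(Finset.range ℓ)

/-- `U` is a shift of `V` (coordinatewise iterate of the shift map). -/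
def IsShiftOf (ℓ : ℕ) (U V : ℕ → ℕ) : Prop :=
  ∃ k, ∀ d, U d = (shift2 ℓ)^[k] (V d)

/-- The set of odd integers `1 ≤ i ≤ d`. -/
def oddUpTo (d : ℕ) : Finset ℕ := (Finset.range (d + 1)).filter (fun i => i % 2 = 1)

/-- `D = {i : 1 ≤ i ≤ 2^{n+1} - 3, i odd}`. -/
def oddD (n : ℕ) : Finset ℕ := oddUpTo (2 ^ (n + 1) - 3)

/-- The solution with `u_a = 1` and all other coordinates `0`. -/
def sol1 (a : ℕ) : ℕ → ℕ := fun d => if d = a then 1 else 0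

/-- The solution with `u_a = x`, `u_b = y` and all other coordinates `0`. -/
def sol2 (a x b y : ℕ) : ℕ → ℕ := fun d => if d = a then x else if d = b then y else 0

/-- The solution with `u_a = x`, `u_b = y`, `u_c = z` and all other coordinates `0`. -/
def sol3 (a x b y c z : ℕ) : ℕ → ℕ :=
  fun d => if d = a then x else if d = b then y else if d = c then z else 0


/-!
Write `φ = φ_U`. For each `d`, `ε_d(k) = δ^k(u_d) / 2^(ℓ-1)` is the bit of `u_d` that the
rotation `δ` carries from the top to the bottom at step `k`, so `∑_k ε_d(k) = s₂(u_d)` and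
`φ(k+1) = 2φ(k) - Δ(k)` with `Δ(k) = ∑_d d·ε_d(k) ≤ C·e(k)`, where `e(k) = ∑_d ε_d(k)` and
`C = 2^{n+1} - 3`. Jumps are exactly the `k` with `Δ(k) > 0`, hence `e(k) ≥ 1`, so there are
`j ≤ ∑_k e(k) = w` of them.

Multiplying `φ(k+1) + Δ(k) = 2φ(k)` over a period, the non-jumps cancel and
`2^ℓ = ∏_{jumps} (1 + Δ(k)/φ(k+1))`. Each factor is at most `2^{e(k)-1} (1 + C/φ(k+1))`, and the
`φ(k+1)` are distinct positive integers by irreducibility, so `2^ℓ ≤ 2^{w-j} binom(C+j, j)`.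
Against `ℓ ≥ (n-1)w` and `n ≥ 18` this leaves no room for `j < w`.
-/

open Finset

lemma s2_eq_mod_add_s2_div (u : ℕ) : s2 u = u % 2 + s2 (u / 2) := by
  rcases Nat.eq_zero_or_pos u with rfl | hu
  · rfl
  · rw [s2, Nat.digits_def' one_lt_two hu, List.sum_cons]; rfl

lemma sum_range_bits {ℓ u : ℕ} (hu : u < 2 ^ ℓ) : ∑ i ∈ range ℓ, u / 2 ^ i % 2 = s2 u := by
  induction ℓ generalizing u with
  | zero =>
    obtain rfl : u = 0 := by simpa using hu
    rfl
  | succ ℓ ih =>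
    have hdiv : u / 2 < 2 ^ ℓ := by rw [pow_succ] at hu; omega
    rw [sum_range_succ', s2_eq_mod_add_s2_div, ← ih hdiv, add_comm]
    simp [pow_succ', Nat.div_div_eq_div_mul]

lemma shift2_lt {ℓ u : ℕ} (hu : u < 2 ^ ℓ) : shift2 ℓ u < 2 ^ ℓ := by
  unfold shift2
  split_ifs with h
  · exact hu
  · exact (Nat.mod_lt _ (by omega)).trans_le (Nat.sub_le _ _)

lemma shift2_iterate_lt {ℓ u : ℕ} (hu : u < 2 ^ ℓ) (k : ℕ) : (shift2 ℓ)^[k] u < 2 ^ ℓ :=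
  Set.MapsTo.iterate (s := Set.Iio (2 ^ ℓ)) (fun _ => shift2_lt) k (Set.mem_Iio.mpr hu)

lemma shift2_succ_mul_add {m t r : ℕ} (ht : t < 2) (hr : r < 2 ^ m) :
    shift2 (m + 1) (t * 2 ^ m + r) = 2 * r + t := by
  have hpow : 2 ^ (m + 1) = 2 * 2 ^ m := pow_succ' 2 m
  unfold shift2
  interval_cases t
  · rw [if_neg (by omega), Nat.mod_eq_of_lt (by omega)]; omega
  · split_ifs with h
    · omega
    · rw [show 2 * (1 * 2 ^ m + r) = (2 ^ (m + 1) - 1) + (2 * r + 1) by omega, Nat.add_mod_left,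
        Nat.mod_eq_of_lt (by omega)]

lemma shift2_succ_apply {m u : ℕ} (hu : u < 2 ^ (m + 1)) :
    shift2 (m + 1) u = 2 * (u % 2 ^ m) + u / 2 ^ m := by
  conv_lhs => rw [← Nat.div_add_mod' u (2 ^ m)]
  refine shift2_succ_mul_add ?_ (Nat.mod_lt _ (by positivity))
  rw [Nat.div_lt_iff_lt_mul (by positivity), ← pow_succ']
  exact hu

lemma shift2_iterate_mul_add {k j a b : ℕ} (ha : a < 2 ^ k) (hb : b < 2 ^ j) :
    (shift2 (k + j))^[k] (a * 2 ^ j + b) = b * 2 ^ k + a := by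
  induction k generalizing j a b with
  | zero =>
    obtain rfl : a = 0 := by simpa using ha
    simp
  | succ k ih =>
    have hsplit : a * 2 ^ j + b = a / 2 * 2 ^ (j + 1) + (a % 2 * 2 ^ j + b) := by
      conv_lhs => rw [← Nat.div_add_mod a 2]
      ring
    have hlow : a % 2 * 2 ^ j + b < 2 ^ (j + 1) := by
      have := Nat.mod_lt a two_pos
      rw [pow_succ']; nlinarith
    have hhigh : b * 2 ^ k + a / 2 < 2 ^ (k + j) := by
      have : a / 2 < 2 ^ k := by rw [pow_succ] at ha; omega
      have hb' : b + 1 ≤ 2 ^ j := hb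
      calc b * 2 ^ k + a / 2 < (b + 1) * 2 ^ k := by rw [add_one_mul]; omega
        _ ≤ 2 ^ j * 2 ^ k := Nat.mul_le_mul_right _ hb'
        _ = 2 ^ (k + j) := by rw [pow_add, mul_comm]
    have hrot : (a % 2 * 2 ^ j + b) * 2 ^ k + a / 2 =
        a % 2 * 2 ^ (k + j) + (b * 2 ^ k + a / 2) := by
      rw [pow_add]; ring
    rw [Function.iterate_succ_apply', show k + 1 + j = k + (j + 1) by ring, hsplit,
      ih (by rw [pow_succ] at ha; omega) hlow, show k + (j + 1) = k + j + 1 by ring, hrot,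
      shift2_succ_mul_add (Nat.mod_lt a two_pos) hhigh]
    conv_rhs => rw [← Nat.div_add_mod a 2]
    ring

lemma shift2_iterate_eq {ℓ k u : ℕ} (hk : k ≤ ℓ) (hu : u < 2 ^ ℓ) :
    (shift2 ℓ)^[k] u = u % 2 ^ (ℓ - k) * 2 ^ k + u / 2 ^ (ℓ - k) := by
  obtain ⟨j, rfl⟩ := Nat.exists_eq_add_of_le hk
  rw [Nat.add_sub_cancel_left]
  conv_lhs => rw [← Nat.div_add_mod' u (2 ^ j)]
  refine shift2_iterate_mul_add ?_ (Nat.mod_lt _ (by positivity))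
  rw [Nat.div_lt_iff_lt_mul (by positivity), ← pow_add]
  exact hu

lemma shift2_iterate_self {ℓ u : ℕ} (hu : u < 2 ^ ℓ) : (shift2 ℓ)^[ℓ] u = u := by
  simp [shift2_iterate_eq le_rfl hu, Nat.mod_one]

lemma shift2_iterate_div {ℓ k u : ℕ} (hk : k < ℓ) (hu : u < 2 ^ ℓ) :
    (shift2 ℓ)^[k] u / 2 ^ (ℓ - 1) = u / 2 ^ (ℓ - 1 - k) % 2 := by
  obtain ⟨i, rfl⟩ : ∃ i, ℓ = k + i + 1 := ⟨ℓ - k - 1, by omega⟩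
  have hlow : u / 2 ^ (i + 1) < 2 ^ k := by
    rw [Nat.div_lt_iff_lt_mul (by positivity), ← pow_add, ← add_assoc]
    exact hu
  rw [shift2_iterate_eq hk.le hu, show k + i + 1 - k = i + 1 by omega,
    show k + i + 1 - 1 - k = i by omega, show k + i + 1 - 1 = k + i by omega, pow_add 2 k i,
    mul_comm _ (2 ^ k), ← Nat.div_div_eq_div_mul, Nat.mul_add_div (by positivity),
    Nat.div_eq_of_lt hlow, add_zero, pow_succ, Nat.mod_mul_right_div_self]

lemma shift2_add_mul_div {ℓ u : ℕ} (hℓ : 1 ≤ ℓ) (hu : u < 2 ^ ℓ) :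
    shift2 ℓ u + (2 ^ ℓ - 1) * (u / 2 ^ (ℓ - 1)) = 2 * u := by
  obtain ⟨m, rfl⟩ := Nat.exists_eq_add_of_le' hℓ
  rw [shift2_succ_apply hu, Nat.add_sub_cancel]
  have hsplit := Nat.div_add_mod u (2 ^ m)
  zify [Nat.one_le_two_pow] at hsplit ⊢
  linear_combination 2 * hsplit

lemma shift2_pos {ℓ u : ℕ} (hu : u < 2 ^ ℓ) (hpos : 0 < u) : 0 < shift2 ℓ u := by
  obtain ⟨m, rfl⟩ : ∃ m, ℓ = m + 1 :=
    Nat.exists_eq_add_one.mpr (Nat.pos_of_ne_zero (by rintro rfl; simp at hu; omega))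
  rw [shift2_succ_apply hu]
  have hsplit := Nat.div_add_mod u (2 ^ m)
  rcases Nat.eq_zero_or_pos (u / 2 ^ m) with h | h
  · rw [h, mul_zero, zero_add] at hsplit; omega
  · omega

lemma shift2_iterate_pos {ℓ u : ℕ} (hu : u < 2 ^ ℓ) (hpos : 0 < u) (k : ℕ) :
    0 < (shift2 ℓ)^[k] u := by
  induction k with
  | zero => exact hpos
  | succ k ih =>
    rw [Function.iterate_succ_apply']
    exact shift2_pos (shift2_iterate_lt hu k) ih

lemma sum_range_shift2_iterate_div {ℓ u : ℕ} (hu : u < 2 ^ ℓ) :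
    ∑ k ∈ range ℓ, (shift2 ℓ)^[k] u / 2 ^ (ℓ - 1) = s2 u := by
  rw [sum_congr rfl fun k hk => shift2_iterate_div (mem_range.mp hk) hu,
    sum_range_reflect (fun i => u / 2 ^ i % 2) ℓ]
  exact sum_range_bits hu

/-- `Δ(k) = 2φ_U(k) - φ_U(k+1)`: the top bit `δ^k(u) / 2^(ℓ-1)` of each coordinate is what `δ`
wraps around, losing `2^ℓ - 1` from `2·δ^k(u)`. -/
def jumpSize (D : Finset ℕ) (ℓ : ℕ) (U : ℕ → ℕ) (k : ℕ) : ℕ :=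
  ∑ d ∈ D, d * ((shift2 ℓ)^[k] (U d) / 2 ^ (ℓ - 1))

def leadCount (D : Finset ℕ) (ℓ : ℕ) (U : ℕ → ℕ) (k : ℕ) : ℕ :=
  ∑ d ∈ D, (shift2 ℓ)^[k] (U d) / 2 ^ (ℓ - 1)

lemma jumpSize_le_mul_leadCount {D : Finset ℕ} {C : ℕ} (hC : ∀ d ∈ D, d ≤ C) (ℓ : ℕ)
    (U : ℕ → ℕ) (k : ℕ) : jumpSize D ℓ U k ≤ C * leadCount D ℓ U k := by
  rw [leadCount, mul_sum]
  exact sum_le_sum fun d hd => Nat.mul_le_mul_right _ (hC d hd)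

namespace IsSolution

variable {D : Finset ℕ} {ℓ : ℕ} {U : ℕ → ℕ} (h : IsSolution D ℓ U)
include h

lemma lt_two_pow (d : ℕ) : U d < 2 ^ ℓ :=
  (h.bounded d).trans_lt (Nat.sub_lt (Nat.two_pow_pos ℓ) one_pos)

lemma two_pow_sub_one_pos : 0 < 2 ^ ℓ - 1 :=
  Nat.sub_pos_of_lt (Nat.one_lt_two_pow (Nat.one_le_iff_ne_zero.mp h.len_pos))

lemma sum_shift_succ_add (k : ℕ) :
    ∑ d ∈ D, d * (shift2 ℓ)^[k + 1] (U d) + (2 ^ ℓ - 1) * jumpSize D ℓ U k =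
      2 * ∑ d ∈ D, d * (shift2 ℓ)^[k] (U d) := by
  rw [jumpSize, mul_sum, mul_sum, ← sum_add_distrib]
  refine sum_congr rfl fun d _ => ?_
  rw [Function.iterate_succ_apply', mul_left_comm (2 ^ ℓ - 1), ← mul_add,
    shift2_add_mul_div h.len_pos (shift2_iterate_lt (h.lt_two_pow d) k), mul_left_comm]

lemma dvd_sum_shift (k : ℕ) : 2 ^ ℓ - 1 ∣ ∑ d ∈ D, d * (shift2 ℓ)^[k] (U d) := by
  induction k with
  | zero => exact h.dvd
  | succ k ih =>
    rw [← Nat.dvd_add_left (dvd_mul_right _ _), h.sum_shift_succ_add k]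
    exact dvd_mul_of_dvd_right ih 2

lemma supportMap_succ_add (k : ℕ) :
    supportMap D ℓ U (k + 1) + jumpSize D ℓ U k = 2 * supportMap D ℓ U k := by
  have hN := h.two_pow_sub_one_pos
  obtain ⟨a, ha⟩ := h.dvd_sum_shift k
  obtain ⟨b, hb⟩ := h.dvd_sum_shift (k + 1)
  have hrec := h.sum_shift_succ_add k
  rw [ha, hb] at hrec
  simp only [supportMap, ha, hb, Nat.mul_div_cancel_left _ hN]
  exact Nat.eq_of_mul_eq_mul_left hN (by linarith)

lemma supportMap_pos (k : ℕ) : 0 < supportMap D ℓ U k := by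
  obtain ⟨d, hd, hdU⟩ := exists_ne_zero_of_sum_ne_zero h.pos.ne'
  obtain ⟨hd0, hU0⟩ := mul_ne_zero_iff.mp hdU
  have hterm : 0 < d * (shift2 ℓ)^[k] (U d) :=
    Nat.mul_pos (Nat.pos_of_ne_zero hd0)
      (shift2_iterate_pos (h.lt_two_pow d) (Nat.pos_of_ne_zero hU0) k)
  have hsum := hterm.trans_le
    (single_le_sum (f := fun d => d * (shift2 ℓ)^[k] (U d)) (fun d _ => Nat.zero_le _) hd)
  exact Nat.div_pos (Nat.le_of_dvd hsum (h.dvd_sum_shift k)) h.two_pow_sub_one_pos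

lemma supportMap_periodic : Function.Periodic (supportMap D ℓ U) ℓ := by
  intro k
  simp only [supportMap, Function.iterate_add_apply, shift2_iterate_self (h.lt_two_pow _)]

lemma sum_leadCount : ∑ k ∈ range ℓ, leadCount D ℓ U k = weight D U := by
  unfold leadCount
  rw [sum_comm]
  exact sum_congr rfl fun d _ => sum_range_shift2_iterate_div (h.lt_two_pow d)

end IsSolution

lemma Function.Periodic.prod_range_add_one_eq {M : Type*} [CommMonoid M] {f : ℕ → M} {ℓ : ℕ}
    (hf : Function.Periodic f ℓ) : ∏ k ∈ range ℓ, f (k + 1) = ∏ k ∈ range ℓ, f k := by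
  cases ℓ with
  | zero => simp
  | succ m =>
    rw [Finset.prod_range_succ, Finset.prod_range_succ', ← hf 0, zero_add]

lemma Function.Periodic.injOn_succ {α : Type*} {f : ℕ → α} {ℓ : ℕ} (hf : Function.Periodic f ℓ)
    (hinj : Set.InjOn f (range ℓ)) : Set.InjOn (fun k => f (k + 1)) (range ℓ) := by
  intro a ha b hb hab
  have hℓ : 0 < ℓ := by simp at ha; omega
  have hmod : (a + 1) % ℓ = (b + 1) % ℓ := by
    refine hinj (by simpa using Nat.mod_lt _ hℓ) (by simpa using Nat.mod_lt _ hℓ) ?_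
    simpa only [hf.map_mod_nat] using hab
  exact Nat.ModEq.eq_of_lt_of_lt (Nat.ModEq.add_right_cancel' 1 hmod) (by simpa using ha)
    (by simpa using hb)

lemma prod_add_mul_factorial_le (C : ℕ) {A : Finset ℕ} (hA : ∀ a ∈ A, 0 < a) :
    (∏ a ∈ A, (a + C)) * A.card.factorial ≤ (∏ a ∈ A, a) * (C + 1).ascFactorial A.card := by
  induction A using Finset.induction_on_max with
  | empty => simp
  | insert a A hlt ih =>
    have ha : a ∉ A := fun h => lt_irrefl a (hlt a h)
    have hcard : A.card + 1 ≤ a := by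
      have : A ⊆ Ioo 0 a := fun x hx => mem_Ioo.mpr ⟨hA x (mem_insert_of_mem hx), hlt x hx⟩
      have := card_le_card this
      rw [Nat.card_Ioo] at this
      have := hA a (mem_insert_self a A)
      omega
    have hstep : (a + C) * (A.card + 1) ≤ a * (C + 1 + A.card) := by nlinarith
    rw [prod_insert ha, prod_insert ha, card_insert_of_notMem ha, Nat.factorial_succ,
      Nat.ascFactorial_succ]
    calc (a + C) * (∏ x ∈ A, (x + C)) * ((A.card + 1) * A.card.factorial)
        = ((a + C) * (A.card + 1)) * ((∏ x ∈ A, (x + C)) * A.card.factorial) := by ring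
      _ ≤ (a * (C + 1 + A.card)) * ((∏ x ∈ A, x) * (C + 1).ascFactorial A.card) :=
        Nat.mul_le_mul hstep (ih fun x hx => hA x (mem_insert_of_mem hx))
      _ = (a * ∏ x ∈ A, x) * ((C + 1 + A.card) * (C + 1).ascFactorial A.card) := by ring

lemma prod_comp_add_mul_factorial_le {ι : Type*} {s : Finset ι} {f : ι → ℕ} (hf : Set.InjOn f s)
    (hpos : ∀ i ∈ s, 0 < f i) (C : ℕ) :
    (∏ i ∈ s, (f i + C)) * s.card.factorial ≤ (∏ i ∈ s, f i) * (C + 1).ascFactorial s.card := by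
  classical
  have := prod_add_mul_factorial_le C (A := s.image f) (by simpa using hpos)
  rwa [prod_image hf, prod_image hf, card_image_of_injOn hf] at this

lemma two_mul_add_mul_le_two_pow_mul {x C e : ℕ} (he : 1 ≤ e) :
    2 * (x + C * e) ≤ 2 ^ e * (x + C) := by
  obtain ⟨m, rfl⟩ := Nat.exists_eq_add_of_le' he
  have hm : m + 1 ≤ 2 ^ m := Nat.lt_two_pow_self
  have hx : x ≤ 2 ^ m * x := Nat.le_mul_of_pos_left x (Nat.two_pow_pos m)
  rw [pow_succ']
  nlinarith

def jumps (φ : ℕ → ℕ) (ℓ : ℕ) : Finset ℕ := (range ℓ).filter fun k => φ (k + 1) < 2 * φ k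

section Jumps

variable {ℓ C : ℕ} {φ Δ e : ℕ → ℕ}

lemma prod_jumps_add (hpos : ∀ k, 0 < φ k) (hper : Function.Periodic φ ℓ)
    (hrec : ∀ k, φ (k + 1) + Δ k = 2 * φ k) :
    ∏ k ∈ jumps φ ℓ, (φ (k + 1) + Δ k) = 2 ^ ℓ * ∏ k ∈ jumps φ ℓ, φ (k + 1) := by
  have htotal : ∏ k ∈ range ℓ, (φ (k + 1) + Δ k) = 2 ^ ℓ * ∏ k ∈ range ℓ, φ (k + 1) := by
    rw [prod_congr rfl fun k _ => hrec k, prod_mul_distrib, prod_const, card_range,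
      hper.prod_range_add_one_eq]
  have hflat : ∀ k ∈ (range ℓ).filter (fun k => ¬ φ (k + 1) < 2 * φ k),
      φ (k + 1) + Δ k = φ (k + 1) := by
    intro k hk
    have := hrec k
    have := (mem_filter.mp hk).2
    omega
  rw [← prod_filter_mul_prod_filter_not (range ℓ) (fun k => φ (k + 1) < 2 * φ k),
    prod_congr rfl hflat,
    ← prod_filter_mul_prod_filter_not (range ℓ) (fun k => φ (k + 1) < 2 * φ k), ← mul_assoc]
    at htotal
  exact mul_right_cancel₀ (prod_ne_zero_iff.mpr fun k _ => (hpos _).ne') htotal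

lemma one_le_of_mem_jumps (hrec : ∀ k, φ (k + 1) + Δ k = 2 * φ k)
    (hΔ : ∀ k, Δ k ≤ C * e k) {k : ℕ} (hk : k ∈ jumps φ ℓ) : 1 ≤ e k := by
  by_contra! h0
  have hΔk := hΔ k
  rw [Nat.lt_one_iff.mp h0, mul_zero] at hΔk
  have := hrec k
  have := (mem_filter.mp hk).2
  omega

lemma card_jumps_le_sum (hrec : ∀ k, φ (k + 1) + Δ k = 2 * φ k)
    (hΔ : ∀ k, Δ k ≤ C * e k) : #(jumps φ ℓ) ≤ ∑ k ∈ jumps φ ℓ, e k := by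
  simpa using card_nsmul_le_sum _ _ 1 fun k hk => one_le_of_mem_jumps hrec hΔ hk

lemma two_pow_mul_factorial_card_jumps_le (hpos : ∀ k, 0 < φ k)
    (hper : Function.Periodic φ ℓ) (hinj : Set.InjOn φ (range ℓ))
    (hrec : ∀ k, φ (k + 1) + Δ k = 2 * φ k) (hΔ : ∀ k, Δ k ≤ C * e k) :
    2 ^ (ℓ + #(jumps φ ℓ)) * (#(jumps φ ℓ)).factorial ≤
      2 ^ (∑ k ∈ jumps φ ℓ, e k) * (C + 1).ascFactorial #(jumps φ ℓ) := by
  set J := jumps φ ℓ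
  have hsucc : ∏ k ∈ J, 2 * (φ (k + 1) + Δ k) ≤ ∏ k ∈ J, 2 ^ e k * (φ (k + 1) + C) :=
    prod_le_prod' fun k hk => (Nat.mul_le_mul_left _ (Nat.add_le_add_left (hΔ k) _)).trans
      (two_mul_add_mul_le_two_pow_mul (one_le_of_mem_jumps hrec hΔ hk))
  rw [← pow_card_mul_prod, prod_mul_distrib, prod_pow_eq_pow_sum,
    prod_jumps_add hpos hper hrec] at hsucc
  have hinjJ : Set.InjOn (fun k => φ (k + 1)) J :=
    (hper.injOn_succ hinj).mono (coe_subset.mpr (filter_subset _ _))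
  have hdistinct := prod_comp_add_mul_factorial_le hinjJ (fun k _ => hpos (k + 1)) C
  have hP : 0 < ∏ k ∈ J, φ (k + 1) := prod_pos fun k _ => hpos _
  refine Nat.le_of_mul_le_mul_right ?_ hP
  calc 2 ^ (ℓ + #J) * (#J).factorial * ∏ k ∈ J, φ (k + 1)
      = 2 ^ #J * (2 ^ ℓ * ∏ k ∈ J, φ (k + 1)) * (#J).factorial := by ring
    _ ≤ 2 ^ (∑ k ∈ J, e k) * (∏ k ∈ J, (φ (k + 1) + C)) * (#J).factorial := by gcongr
    _ ≤ 2 ^ (∑ k ∈ J, e k) * ((∏ k ∈ J, φ (k + 1)) * (C + 1).ascFactorial #J) := by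
      rw [mul_assoc]; gcongr
    _ = 2 ^ (∑ k ∈ J, e k) * (C + 1).ascFactorial #J * ∏ k ∈ J, φ (k + 1) := by ring

end Jumps

lemma eight_pow_le_factorial (j : ℕ) : 8 ^ j ≤ 2 ^ 9 * j.factorial := by
  induction j with
  | zero => norm_num
  | succ j ih =>
    rcases lt_or_ge j 7 with hj | hj
    · interval_cases j <;> decide
    · rw [pow_succ, Nat.factorial_succ]
      nlinarith

lemma le_of_two_pow_mul_factorial_le {n C ℓ w j s : ℕ} (hn : 18 ≤ n) (hC : C < 2 ^ (n + 1))
    (hjs : j ≤ s) (hsw : s ≤ w) (hlow : (n - 1) * w ≤ ℓ)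
    (hkey : 2 ^ (ℓ + j) * j.factorial ≤ 2 ^ s * (C + 1).ascFactorial j) : w ≤ j := by
  obtain ⟨m, rfl⟩ : ∃ m, n = m + 18 := ⟨n - 18, by omega⟩
  rw [show m + 18 - 1 = m + 17 by omega, Nat.add_mul] at hlow
  -- The crude bound `binom(C + j, j) ≤ 2^(C + j)` first gives `(n - 2) w ≤ C`, hence
  -- `C + j ≤ 2^(n + 2)` in the finer bound `binom(C + j, j) ≤ (C + j)^j / j!`.
  have hcrude : ℓ + j ≤ s + (C + j) := by
    rw [Nat.ascFactorial_eq_factorial_mul_choose, mul_left_comm, mul_comm (2 ^ (ℓ + j))] at hkey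
    have hle := (Nat.le_of_mul_le_mul_left hkey (Nat.factorial_pos j)).trans
      (Nat.mul_le_mul_left (2 ^ s) (Nat.choose_le_two_pow (C + j) j))
    rwa [← pow_add, Nat.pow_le_pow_iff_right one_lt_two] at hle
  have hsmall : C + j ≤ 2 ^ (m + 18 + 2) := by
    rw [pow_succ _ (m + 18 + 1)]
    omega
  have hfine : ℓ + j + 3 * j ≤ 9 + s + (m + 18 + 2) * j := by
    rw [← Nat.pow_le_pow_iff_right one_lt_two]
    calc 2 ^ (ℓ + j + 3 * j) = 2 ^ (ℓ + j) * 8 ^ j := by rw [pow_add, pow_mul]; norm_num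
      _ ≤ 2 ^ (ℓ + j) * (2 ^ 9 * j.factorial) := by gcongr; exact eight_pow_le_factorial j
      _ = 2 ^ 9 * (2 ^ (ℓ + j) * j.factorial) := by ring
      _ ≤ 2 ^ 9 * (2 ^ s * (C + j) ^ j) := Nat.mul_le_mul_left _
        (hkey.trans (Nat.mul_le_mul_left _ (Nat.ascFactorial_le_pow_add C j)))
      _ ≤ 2 ^ 9 * (2 ^ s * (2 ^ (m + 18 + 2)) ^ j) := by gcongr
      _ = 2 ^ (9 + s + (m + 18 + 2) * j) := by rw [← pow_mul, ← pow_add, ← pow_add, ← add_assoc]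
  -- what is left is `(n - 2) (w - j) ≤ 9`
  have := Nat.mul_le_mul_left m (hjs.trans hsw)
  rw [show (m + 18 + 2) * j = m * j + 20 * j by ring] at hfine
  omega

theorem support_has_weight_jumps_general
    (n : ℕ) (hn : 18 ≤ n) (ℓ w : ℕ) (U : ℕ → ℕ)
    (hsol : IsSolution (oddD n) ℓ U)
    (hirr : IrreducibleSol (oddD n) ℓ U)
    (hw : weight (oddD n) U = w)
    (hlow : (n - 1) * w ≤ ℓ) :
    ((Finset.range ℓ).filter
        (fun k => supportMap (oddD n) ℓ U (k + 1) < 2 * supportMap (oddD n) ℓ U k)).card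
      = w := by
  show #(jumps (supportMap (oddD n) ℓ U) ℓ) = w
  have hD : ∀ d ∈ oddD n, d ≤ 2 ^ (n + 1) - 3 := fun d hd => by
    simp only [oddD, oddUpTo, mem_filter, mem_range] at hd
    omega
  have hrec := hsol.supportMap_succ_add
  have hΔ := jumpSize_le_mul_leadCount hD ℓ U
  have hjs := card_jumps_le_sum (ℓ := ℓ) hrec hΔ
  have hsw : ∑ k ∈ jumps (supportMap (oddD n) ℓ U) ℓ, leadCount (oddD n) ℓ U k ≤ w :=
    hw ▸ hsol.sum_leadCount ▸ sum_le_sum_of_subset (filter_subset _ _)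
  have hkey := two_pow_mul_factorial_card_jumps_le hsol.supportMap_pos hsol.supportMap_periodic
    hirr hrec hΔ
  have hC : 2 ^ (n + 1) - 3 < 2 ^ (n + 1) := Nat.sub_lt (Nat.two_pow_pos _) three_pos
  exact le_antisymm (hjs.trans hsw) (le_of_two_pow_mul_factorial_le hn hC hjs hsw hlow hkey)

/-- For `n ≥ 18` and `D = {i : 1 ≤ i ≤ 2^{n+1} − 3, i odd}`, any irreducible solution
of length `ℓ` and weight `w` with density in `[1/n, 1/(n−1)]` has a support with
exactly `w` jumps, i.e. there are exactly `w` values `k ∈ ℤ/ℓℤ` with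
`φ_U(k+1) < 2·φ_U(k)`. -/
theorem support_has_weight_jumps
    (n : ℕ) (hn : 18 ≤ n) (ℓ w : ℕ) (U : ℕ → ℕ)
    (hsol : IsSolution (oddD n) ℓ U)
    (hirr : IrreducibleSol (oddD n) ℓ U)
    (hw : weight (oddD n) U = w)
    (hlow : (n - 1) * w ≤ ℓ) (hhigh : ℓ ≤ n * w) :
    ((Finset.range ℓ).filter
        (fun k => supportMap (oddD n) ℓ U (k + 1) < 2 * supportMap (oddD n) ℓ U k)).card
      = w :=
  support_has_weight_jumps_general n hn ℓ w U hsol hirr hw hlow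
end

section
/- Let n ≥ 3 and u ≥ 1 be integers. Let n_k, n_{k+1}, ℓ_k, ℓ_{k+1} be positive integers such that n_k > 2^u, 2^{ℓ_k − 1}·n_k ≤ 2^{n+1} − 3, 2^{ℓ_{k+1} − 1}·n_{k+1} ≤ 2^{n+1} − 3, and 1 ≤ 2^{ℓ_k}·n_k − n_{k+1} ≤ 2^{n+1} − 3. Then at least one of the following holds: (i) ℓ_k ≤ n − u; (ii) ℓ_k + ℓ_{k+1} ≤ n + 1. (This is the arithmetic content of the lemma on consecutive geometric runs of the support of a solution whose support has exactly as many jumps as its weight: n_k and n_{k+1} are the initial terms of two consecutive runs, ℓ_k and ℓ_{k+1} their lengths, and 2^{ℓ_k} n_k − n_{k+1} is the corresponding jump, which lies in D = {odd i with 1 ≤ i ≤ 2^{n+1}−3}.) -/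
/-! If the run starting at `n_k > 2^u` had length `ℓ_k > n - u`, then
`2^{ℓ_k - 1}·n_k < 2^{n+1}` forces `ℓ_k = n + 1 - u`. A following run of length `ℓ_{k+1} > u`
would in the same way force `n_{k+1} < 2^{ℓ_k}`, and then the jump `2^{ℓ_k}·n_k − n_{k+1}`
exceeds `2^{ℓ_k}·2^u = 2^{n+1}`, which is too large for `D`. -/

theorem Nat.lt_pow_sub_of_pow_mul_lt_pow {b k m N : ℕ} (hb : 1 < b) (h : b ^ k * m < b ^ N) :
    m < b ^ (N - k) := by
  rcases le_or_gt k N with hkN | hNk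
  · rw [← Nat.pow_sub_mul_pow b hkN, mul_comm] at h
    exact Nat.lt_of_mul_lt_mul_right h
  · have hm : b ^ k * m < b ^ k * 1 :=
      h.trans_le (by simpa using Nat.pow_le_pow_right hb.le hNk.le)
    obtain rfl : m = 0 := by simpa using Nat.lt_of_mul_lt_mul_left hm
    exact Nat.pow_pos (by omega)

theorem Nat.mul_lt_mul_sub_of_lt {a b c m : ℕ} (hba : b < a) (hcm : c < m) :
    a * c < a * m - b := by
  have : a * (c + 1) ≤ a * m := Nat.mul_le_mul_left a hcm
  rw [mul_add, mul_one] at this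
  omega

theorem consecutive_runs_length_bound_general
    (n u nk nk' lk lk' : ℕ)
    (hbig : 2 ^ u < nk)
    (hrun : 2 ^ (lk - 1) * nk ≤ 2 ^ (n + 1) - 3)
    (hrun' : 2 ^ (lk' - 1) * nk' ≤ 2 ^ (n + 1) - 3)
    (hjump_le : 2 ^ lk * nk - nk' ≤ 2 ^ (n + 1) - 3) :
    lk ≤ n - u ∨ lk + lk' ≤ n + 1 := by
  refine or_iff_not_imp_left.mpr fun hlong => le_of_not_gt fun hsum => ?_
  have hD : 2 ^ (n + 1) - 3 < 2 ^ (n + 1) := Nat.sub_lt (by positivity) (by norm_num)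
  have hnk : nk < 2 ^ (n + 1 - (lk - 1)) :=
    Nat.lt_pow_sub_of_pow_mul_lt_pow one_lt_two (hrun.trans_lt hD)
  have hu : u < n + 1 - (lk - 1) := (Nat.pow_lt_pow_iff_right one_lt_two).mp (hbig.trans hnk)
  have hnk' : nk' < 2 ^ lk :=
    (Nat.lt_pow_sub_of_pow_mul_lt_pow one_lt_two (hrun'.trans_lt hD)).trans_le
      (Nat.pow_le_pow_right two_pos (by omega))
  have hjump : 2 ^ (n + 1) < 2 ^ lk * nk - nk' := by
    rw [show n + 1 = lk + u by omega, pow_add]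
    exact Nat.mul_lt_mul_sub_of_lt hnk' hbig
  omega

/-- Arithmetic content of the lemma on two consecutive geometric runs of the support
of a solution whose support has exactly as many jumps as its weight: `n_k, n_{k+1}` are
the initial terms of two consecutive runs, `ℓ_k, ℓ_{k+1}` their lengths, and
`2^{ℓ_k}·n_k − n_{k+1}` is the corresponding jump, which lies in
`D = {odd i : 1 ≤ i ≤ 2^{n+1} − 3}`.  If `n_k > 2^u` then either `ℓ_k ≤ n − u` or
`ℓ_k + ℓ_{k+1} ≤ n + 1`. -/
theorem consecutive_runs_length_bound
    (n u nk nk' lk lk' : ℕ) (hn : 3 ≤ n) (hu : 1 ≤ u)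
    (hnk : 0 < nk) (hnk' : 0 < nk') (hlk : 0 < lk) (hlk' : 0 < lk')
    (hbig : 2 ^ u < nk)
    (hrun : 2 ^ (lk - 1) * nk ≤ 2 ^ (n + 1) - 3)
    (hrun' : 2 ^ (lk' - 1) * nk' ≤ 2 ^ (n + 1) - 3)
    (hjump_pos : 1 ≤ 2 ^ lk * nk - nk')
    (hjump_le : 2 ^ lk * nk - nk' ≤ 2 ^ (n + 1) - 3) :
    lk ≤ n - u ∨ lk + lk' ≤ n + 1 :=
  consecutive_runs_length_bound_general n u nk nk' lk lk' hbig hrun hrun' hjump_le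
end

section
/- There exists N such that for all n ≥ N the following holds for D = {i : 1 ≤ i ≤ 2^{n+1} − 3, i odd}: there is no irreducible solution for D of weight 5 and length 5(n−1) (i.e. no irreducible solution of weight 5 and density 1/(n−1)). -/
/-! ### Auxiliary lemmas -/

lemma s2_zero : s2 0 = 0 := by simp [s2]

lemma s2_rec (m : ℕ) (hm : m ≠ 0) : s2 m = m % 2 + s2 (m / 2) := by
  unfold s2
  rw [Nat.digits_def' (by norm_num : (1:ℕ) < 2) (Nat.pos_of_ne_zero hm)]
  simp

lemma s2_pos (m : ℕ) (hm : m ≠ 0) : 1 ≤ s2 m := by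
  induction m using Nat.strong_induction_on with
  | _ m ih =>
    rw [s2_rec m hm]
    rcases Nat.mod_two_eq_zero_or_one m with h | h
    · have h2 : m / 2 ≠ 0 := by omega
      have := ih (m / 2) (by omega) h2
      omega
    · omega

lemma s2_pow_sub_one (l : ℕ) : s2 (2 ^ l - 1) = l := by
  induction l with
  | zero => simp [s2]
  | succ l ih =>
    have h2 : (2:ℕ) ^ (l+1) = 2 * 2 ^ l := by ring
    have hpos : (1:ℕ) ≤ 2 ^ l := Nat.one_le_two_pow
    have hne : 2 ^ (l+1) - 1 ≠ 0 := by omega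
    rw [s2_rec _ hne]
    have e1 : (2 ^ (l+1) - 1) % 2 = 1 := by omega
    have e2 : (2 ^ (l+1) - 1) / 2 = 2 ^ l - 1 := by omega
    rw [e1, e2, ih]; omega

-- B0: bit sum
lemma bitsum (l : ℕ) : ∀ v : ℕ, v < 2 ^ l → ∑ j ∈ Finset.range l, (v / 2 ^ j % 2) = s2 v := by
  induction l with
  | zero => intro v hv; interval_cases v; simp [s2]
  | succ l ih =>
    intro v hv
    rw [Finset.sum_range_succ']
    have e : ∀ j : ℕ, v / 2 ^ (j+1) % 2 = (v / 2) / 2 ^ j % 2 := by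
      intro j
      rw [pow_succ, mul_comm, Nat.div_div_eq_div_mul, mul_comm]
    simp only [e]
    rw [ih (v / 2) (by
      have : (2:ℕ)^(l+1) = 2 * 2^l := by ring
      omega)]
    simp only [pow_zero, Nat.div_one]
    rcases eq_or_ne v 0 with rfl | hv0
    · simp [s2]
    · rw [s2_rec v hv0]; omega

lemma shift2_eq {l v : ℕ} (hv : v < 2 ^ l - 1) : shift2 l v = (2 * v) % (2 ^ l - 1) := by
  unfold shift2
  rw [if_neg (by omega)]

lemma shift2_iter {l : ℕ} (hl : 2 ≤ l) {v : ℕ} (hv : v < 2 ^ l - 1) (k : ℕ) :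
    (shift2 l)^[k] v = 2 ^ k * v % (2 ^ l - 1) := by
  have hN : 4 ≤ 2 ^ l := by
    calc (4:ℕ) = 2^2 := by norm_num
      _ ≤ 2 ^ l := Nat.pow_le_pow_right (by norm_num) hl
  induction k with
  | zero => simpa using (Nat.mod_eq_of_lt hv).symm
  | succ k ih =>
    rw [Function.iterate_succ_apply', ih]
    have hlt : 2 ^ k * v % (2 ^ l - 1) < 2 ^ l - 1 := Nat.mod_lt _ (by omega)
    rw [shift2_eq hlt]
    have h2m : 2 % (2 ^ l - 1) = 2 := Nat.mod_eq_of_lt (by omega)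
    calc 2 * ((2 ^ k * v) % (2 ^ l - 1)) % (2 ^ l - 1)
        = (2 % (2 ^ l - 1)) * ((2 ^ k * v) % (2 ^ l - 1)) % (2 ^ l - 1) := by rw [h2m]
      _ = (2 * (2 ^ k * v)) % (2 ^ l - 1) := by rw [← Nat.mul_mod]
      _ = 2 ^ (k + 1) * v % (2 ^ l - 1) := by ring_nf

lemma shift2_iter_lt {l : ℕ} (hl : 2 ≤ l) {v : ℕ} (hv : v < 2 ^ l - 1) (k : ℕ) :
    (shift2 l)^[k] v < 2 ^ l - 1 := by
  rw [shift2_iter hl hv k]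
  exact Nat.mod_lt _ (by have : (2:ℕ) ≤ 2^l := by have := Nat.pow_le_pow_right (show 1≤2 by norm_num) (show 1 ≤ l by omega); simpa using this
                         omega)

lemma shift2_zero (l k : ℕ) (hl : 2 ≤ l) : (shift2 l)^[k] 0 = 0 := by
  have h4 : (4:ℕ) ≤ 2 ^ l := by calc (4:ℕ) = 2^2 := by norm_num
                                    _ ≤ 2 ^ l := Nat.pow_le_pow_right (by norm_num) hl
  rw [shift2_iter hl (by omega) k]
  simp

lemma shift2_period {l : ℕ} (hl : 2 ≤ l) {v : ℕ} (hv : v < 2 ^ l - 1) (k : ℕ) :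
    (shift2 l)^[k + l] v = (shift2 l)^[k] v := by
  rw [Function.iterate_add_apply]
  have h4 : (4:ℕ) ≤ 2 ^ l := by calc (4:ℕ) = 2^2 := by norm_num
                                    _ ≤ 2 ^ l := Nat.pow_le_pow_right (by norm_num) hl
  have hiter : (shift2 l)^[l] v = v := by
    rw [shift2_iter hl hv l]
    have e : (2:ℕ) ^ l = (2 ^ l - 1) + 1 := by omega
    have emul : 2 ^ l * v = (2 ^ l - 1) * v + v := by
      nth_rewrite 1 [e]; rw [add_mul, one_mul]
    calc 2 ^ l * v % (2 ^ l - 1) = ((2 ^ l - 1) * v + v) % (2 ^ l - 1) := by rw [emul]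
      _ = v % (2 ^ l - 1) := Nat.mul_add_mod _ _ _
      _ = v := Nat.mod_eq_of_lt hv
  rw [hiter]

lemma shift2_rot {l : ℕ} (hl : 2 ≤ l) {v : ℕ} (hv : v < 2 ^ l - 1) {k : ℕ} (hk : k < l) :
    (shift2 l)^[k] v = v / 2 ^ (l - k) + 2 ^ k * (v % 2 ^ (l - k)) ∧
    v / 2 ^ (l - k) + 2 ^ k * (v % 2 ^ (l - k)) < 2 ^ l - 1 := by
  set A := 2 ^ k with hA
  set B := 2 ^ (l - k) with hB
  have hAB : A * B = 2 ^ l := by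
    rw [hA, hB, ← pow_add]; congr 1; omega
  have hApos : 1 ≤ A := Nat.one_le_two_pow
  have hBpos : 1 ≤ B := Nat.one_le_two_pow
  set hi := v / B with hhi
  set lo := v % B with hlo
  have hvd : B * hi + lo = v := Nat.div_add_mod v B
  have hlolt : lo < B := Nat.mod_lt _ (by omega)
  have hhilt : hi < A := by
    rw [hhi]
    rw [Nat.div_lt_iff_lt_mul (by omega)]
    calc v < 2 ^ l - 1 := hv
      _ ≤ A * B := by omega
  have e1 : A * (B - 1) + A = A * B := by
    have h : B - 1 + 1 = B := by omega
    calc A * (B - 1) + A = A * ((B - 1) + 1) := by ring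
      _ = A * B := by rw [h]
  have hsum : hi + A * lo < 2 ^ l - 1 := by
    rcases Nat.lt_or_ge lo (B - 1) with h | h
    · have h2 : A * lo + A ≤ A * (B - 1) := by
        calc A * lo + A = A * (lo + 1) := by ring
          _ ≤ A * (B - 1) := Nat.mul_le_mul_left A (by omega)
      omega
    · have hloeq : lo = B - 1 := by omega
      have h3 : A * lo + A = A * B := by rw [hloeq]; exact e1
      rcases Nat.lt_or_ge hi (A - 1) with h4 | h4
      · omega
      · exfalso
        have hhieq : hi = A - 1 := by omega
        have e2 : B * (A - 1) + B = B * A := by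
          have h : A - 1 + 1 = A := by omega
          calc B * (A - 1) + B = B * ((A - 1) + 1) := by ring
            _ = B * A := by rw [h]
        have : v = A * B - 1 := by
          rw [← hvd, hhieq, hloeq]
          have : B * A = A * B := by ring
          omega
        omega
  constructor
  · rw [shift2_iter hl hv k]
    have expand : 2 ^ k * v = (2 ^ l - 1) * hi + (hi + A * lo) := by
      have h2l : (2:ℕ) ^ l = A * B := hAB.symm
      calc 2 ^ k * v = A * (B * hi + lo) := by rw [hvd]
        _ = (A * B) * hi + A * lo := by ring
        _ = (2 ^ l) * hi + A * lo := by rw [hAB]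
        _ = ((2 ^ l - 1) + 1) * hi + A * lo := by
            congr 2
            have : (1:ℕ) ≤ 2 ^ l := Nat.one_le_two_pow
            omega
        _ = (2 ^ l - 1) * hi + (hi + A * lo) := by ring
    rw [expand, Nat.mul_add_mod, Nat.mod_eq_of_lt hsum]
  · exact hsum

lemma topbit_arith {A B' hi lo : ℕ} (hhilt : hi < A) :
    (A * B' ≤ hi + A * lo) ↔ B' ≤ lo := by
  constructor
  · intro h
    by_contra hc
    push_neg at hc
    have h2 : A * (lo + 1) ≤ A * B' := Nat.mul_le_mul_left A hc
    have h3 : A * (lo + 1) = A * lo + A := by ring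
    omega
  · intro h
    have := Nat.mul_le_mul_left A h
    omega

lemma shift2_topbit {l : ℕ} (hl : 2 ≤ l) {v : ℕ} (hv : v < 2 ^ l - 1) {k : ℕ} (hk : k < l) :
    (2 ^ (l - 1) ≤ (shift2 l)^[k] v) ↔ v / 2 ^ (l - 1 - k) % 2 = 1 := by
  obtain ⟨hrot, -⟩ := shift2_rot hl hv hk
  set A := 2 ^ k with hA
  set B := 2 ^ (l - k) with hB
  set B' := 2 ^ (l - 1 - k) with hB'
  have hBB' : B = 2 * B' := by
    rw [hB, hB', ← pow_succ']; congr 1; omega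
  have hAB' : A * B' = 2 ^ (l - 1) := by
    rw [hA, hB', ← pow_add]; congr 1; omega
  have hApos : 1 ≤ A := Nat.one_le_two_pow
  have hB'pos : 1 ≤ B' := Nat.one_le_two_pow
  set hi := v / B with hhi
  set lo := v % B with hlo
  have hlolt : lo < B := Nat.mod_lt _ (by omega)
  have hhilt : hi < A := by
    rw [hhi, Nat.div_lt_iff_lt_mul (by omega)]
    have hAB : A * B = 2 ^ l := by rw [hA, hB, ← pow_add]; congr 1; omega
    calc v < 2 ^ l - 1 := hv
      _ ≤ A * B := by omega
  have key : (2 ^ (l - 1) ≤ hi + A * lo) ↔ B' ≤ lo := by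
    rw [← hAB']
    exact topbit_arith hhilt
  have bit : (B' ≤ lo) ↔ v / 2 ^ (l - 1 - k) % 2 = 1 := by
    have hdiv : lo / B' = v / B' % 2 := by
      rw [hlo, hBB', mul_comm]
      exact Nat.mod_mul_right_div_self v B' 2
    have hlt2 : lo / B' < 2 := by
      rw [Nat.div_lt_iff_lt_mul (by omega)]
      omega
    have : (B' ≤ lo) ↔ 1 ≤ lo / B' := by
      rw [Nat.one_le_div_iff (by omega)]
    rw [this, ← hB']
    omega
  rw [hrot, key, bit]

lemma shift2_topcount {l : ℕ} (hl : 2 ≤ l) {v : ℕ} (hv : v < 2 ^ l - 1) :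
    ∑ k ∈ Finset.range l, (if 2 ^ (l - 1) ≤ (shift2 l)^[k] v then 1 else 0) = s2 v := by
  have hcong : ∀ k ∈ Finset.range l,
      (if 2 ^ (l - 1) ≤ (shift2 l)^[k] v then 1 else 0) = v / 2 ^ (l - 1 - k) % 2 := by
    intro k hk
    rw [Finset.mem_range] at hk
    rcases Nat.mod_two_eq_zero_or_one (v / 2 ^ (l - 1 - k)) with h | h
    · rw [if_neg, h]
      rw [shift2_topbit hl hv hk]
      omega
    · rw [if_pos, h]
      rw [shift2_topbit hl hv hk]
      exact h
  rw [Finset.sum_congr rfl hcong]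
  have hrefl := Finset.sum_range_reflect (fun j => v / 2 ^ j % 2) l
  rw [hrefl]
  exact bitsum l v (by have : (1:ℕ) ≤ 2 ^ l := Nat.one_le_two_pow; omega)

/-! mid-level definitions -/

def TT (n : ℕ) (U : ℕ → ℕ) (k : ℕ) : ℕ :=
  ∑ d ∈ oddD n, d * (shift2 (5 * (n - 1)))^[k] (U d)

def CC (n : ℕ) (U : ℕ → ℕ) (k : ℕ) : ℕ :=
  ∑ d ∈ oddD n, d * (if 2 ^ (5 * (n - 1) - 1) ≤ (shift2 (5 * (n - 1)))^[k] (U d) then 1 else 0)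

def II (n : ℕ) (U : ℕ → ℕ) (k : ℕ) : ℕ :=
  ∑ d ∈ oddD n, (if 2 ^ (5 * (n - 1) - 1) ≤ (shift2 (5 * (n - 1)))^[k] (U d) then 1 else 0)

section Mid

variable {n : ℕ} {U : ℕ → ℕ}

lemma hl2 (hn : 100 ≤ n) : 2 ≤ 5 * (n - 1) := by omega

lemma pow_mono {a b : ℕ} (h : a ≤ b) : (2:ℕ) ^ a ≤ 2 ^ b := Nat.pow_le_pow_right (by norm_num) h

lemma NN4 (hn : 100 ≤ n) : 4 ≤ 2 ^ (5 * (n - 1)) := by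
  calc (4:ℕ) = 2 ^ 2 := by norm_num
    _ ≤ 2 ^ (5 * (n - 1)) := pow_mono (by omega)

lemma mem_oddD {d : ℕ} (hd : d ∈ oddD n) : d % 2 = 1 ∧ 1 ≤ d ∧ d ≤ 2 ^ (n + 1) - 3 := by
  rw [oddD, oddUpTo, Finset.mem_filter, Finset.mem_range] at hd
  omega

lemma Ult (hn : 100 ≤ n) (sol : IsSolution (oddD n) (5 * (n - 1)) U)
    (hwt : weight (oddD n) U = 5) (d : ℕ) : U d < 2 ^ (5 * (n - 1)) - 1 := by
  have h4 := NN4 hn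
  by_cases hd : d ∈ oddD n
  · have hb := sol.bounded d
    rcases Nat.lt_or_ge (U d) (2 ^ (5 * (n - 1)) - 1) with h | h
    · exact h
    · exfalso
      have heq : U d = 2 ^ (5 * (n - 1)) - 1 := by omega
      have h5 : s2 (U d) ≤ 5 := by
        rw [← hwt]
        exact Finset.single_le_sum (f := fun d => s2 (U d)) (fun i _ => Nat.zero_le _) hd
      rw [heq, s2_pow_sub_one] at h5
      omega
  · rw [sol.supp_sub d hd]; omega

lemma TT_dvd (hn : 100 ≤ n) (sol : IsSolution (oddD n) (5 * (n - 1)) U)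
    (hwt : weight (oddD n) U = 5) (k : ℕ) : (2 ^ (5 * (n - 1)) - 1) ∣ TT n U k := by
  set L := 5 * (n - 1)
  set NN := 2 ^ L - 1 with hNN
  apply Nat.dvd_of_mod_eq_zero
  have h1 : TT n U k % NN = (2 ^ k * ∑ d ∈ oddD n, d * U d) % NN := by
    rw [TT, Finset.mul_sum, Finset.sum_nat_mod, Finset.sum_nat_mod (n := NN)
      (s := oddD n) (f := fun d => 2 ^ k * (d * U d))]
    congr 1
    apply Finset.sum_congr rfl
    intro d _
    rw [shift2_iter (hl2 hn) (Ult hn sol hwt d) k]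
    have h2 : (2 ^ k * U d) % NN ≡ 2 ^ k * U d [MOD NN] := Nat.mod_modEq _ _
    have h3 := Nat.ModEq.mul_left d h2
    have h4 : d * (2 ^ k * U d) = 2 ^ k * (d * U d) := by ring
    exact h3.trans (by rw [h4])
  rw [h1]
  exact Nat.mod_eq_zero_of_dvd (Dvd.dvd.mul_left sol.dvd (2 ^ k))

lemma TT_pos (hn : 100 ≤ n) (sol : IsSolution (oddD n) (5 * (n - 1)) U)
    (hwt : weight (oddD n) U = 5) (k : ℕ) : 0 < TT n U k := by
  have h4 : 4 ≤ 2 ^ (5 * (n - 1)) := NN4 hn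
  obtain ⟨d0, hd0D, hd0⟩ := Finset.exists_ne_zero_of_sum_ne_zero (by
    have := sol.pos; omega : ∑ d ∈ oddD n, d * U d ≠ 0)
  have hd01 : 1 ≤ d0 := (mem_oddD hd0D).2.1
  have hU1 : 1 ≤ U d0 := by
    rcases Nat.eq_zero_or_pos (U d0) with h | h
    · exfalso; rw [h, Nat.mul_zero] at hd0; exact hd0 rfl
    · exact h
  have hUlt : U d0 < 2 ^ (5 * (n - 1)) - 1 := Ult hn sol hwt d0
  have hitpos : 1 ≤ (shift2 (5 * (n - 1)))^[k] (U d0) := by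
    rw [shift2_iter (hl2 hn) hUlt k]
    rcases Nat.eq_zero_or_pos (2 ^ k * U d0 % (2 ^ (5 * (n - 1)) - 1)) with h | h
    · exfalso
      have hdvd : (2 ^ (5 * (n - 1)) - 1) ∣ 2 ^ k * U d0 := Nat.dvd_of_mod_eq_zero h
      have hodd : Odd (2 ^ (5 * (n - 1)) - 1) := by
        have h2 : (2:ℕ) ^ (5 * (n - 1)) = 2 * 2 ^ (5 * (n - 1) - 1) := by
          rw [← pow_succ']; congr 1; omega
        refine Nat.odd_iff.mpr ?_
        omega
      have hcop : Nat.Coprime (2 ^ (5 * (n - 1)) - 1) (2 ^ k) :=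
        Nat.Coprime.pow_right k (Nat.coprime_two_right.mpr hodd)
      have hdvd2 : (2 ^ (5 * (n - 1)) - 1) ∣ U d0 := hcop.dvd_of_dvd_mul_left hdvd
      have := Nat.le_of_dvd (by omega) hdvd2
      omega
    · exact h
  calc 0 < d0 * (shift2 (5 * (n - 1)))^[k] (U d0) := by positivity
    _ ≤ TT n U k := Finset.single_le_sum (f := fun d => d * (shift2 (5 * (n - 1)))^[k] (U d))
        (fun i _ => Nat.zero_le _) hd0D

lemma MM_eq (hn : 100 ≤ n) (sol : IsSolution (oddD n) (5 * (n - 1)) U)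
    (hwt : weight (oddD n) U = 5) (k : ℕ) :
    (2 ^ (5 * (n - 1)) - 1) * supportMap (oddD n) (5 * (n - 1)) U k = TT n U k := by
  have : supportMap (oddD n) (5 * (n - 1)) U k = TT n U k / (2 ^ (5 * (n - 1)) - 1) := rfl
  rw [this, Nat.mul_div_cancel' (TT_dvd hn sol hwt k)]

lemma MM_one (hn : 100 ≤ n) (sol : IsSolution (oddD n) (5 * (n - 1)) U)
    (hwt : weight (oddD n) U = 5) (k : ℕ) : 1 ≤ supportMap (oddD n) (5 * (n - 1)) U k := by
  have h4 := NN4 hn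
  rcases Nat.eq_zero_or_pos (supportMap (oddD n) (5 * (n - 1)) U k) with h | h
  · exfalso
    have := MM_eq hn sol hwt k
    rw [h, Nat.mul_zero] at this
    have := TT_pos hn sol hwt k
    omega
  · exact h

lemma card_supp (hwt : weight (oddD n) U = 5) :
    ((oddD n).filter (fun d => U d ≠ 0)).card ≤ 5 := by
  have h1 : ((oddD n).filter (fun d => U d ≠ 0)).card
      ≤ ∑ d ∈ (oddD n).filter (fun d => U d ≠ 0), s2 (U d) := by
    rw [Finset.card_eq_sum_ones]
    apply Finset.sum_le_sum
    intro d hd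
    exact s2_pos _ (Finset.mem_filter.mp hd).2
  have h2 : ∑ d ∈ (oddD n).filter (fun d => U d ≠ 0), s2 (U d) ≤ weight (oddD n) U :=
    Finset.sum_le_sum_of_subset (Finset.filter_subset _ _)
  omega

lemma TT_filter (hn : 100 ≤ n) (k : ℕ) :
    TT n U k = ∑ d ∈ (oddD n).filter (fun d => U d ≠ 0), d * (shift2 (5 * (n - 1)))^[k] (U d) := by
  rw [TT]
  symm
  apply Finset.sum_filter_of_ne
  intro d _ hne
  intro h0
  rw [h0, shift2_zero _ _ (hl2 hn), Nat.mul_zero] at hne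
  exact hne rfl

lemma MM_le (hn : 100 ≤ n) (sol : IsSolution (oddD n) (5 * (n - 1)) U)
    (hwt : weight (oddD n) U = 5) (k : ℕ) :
    supportMap (oddD n) (5 * (n - 1)) U k ≤ 2 ^ (n + 4) := by
  have h4 : 4 ≤ 2 ^ (5 * (n - 1)) := NN4 hn
  have hTle : TT n U k ≤ 5 * (2 ^ (n + 1) * (2 ^ (5 * (n - 1)) - 1)) := by
    rw [TT_filter hn k]
    calc ∑ d ∈ (oddD n).filter (fun d => U d ≠ 0), d * (shift2 (5 * (n - 1)))^[k] (U d)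
        ≤ ((oddD n).filter (fun d => U d ≠ 0)).card • (2 ^ (n + 1) * (2 ^ (5 * (n - 1)) - 1)) := by
          apply Finset.sum_le_card_nsmul
          intro d hd
          have hdD := (Finset.mem_filter.mp hd).1
          have hd1 : d ≤ 2 ^ (n + 1) - 3 := (mem_oddD hdD).2.2
          have hp : 1 ≤ 2 ^ n := Nat.one_le_two_pow
          have hd2 : d ≤ 2 ^ (n + 1) := by omega
          have hit : (shift2 (5 * (n - 1)))^[k] (U d) ≤ 2 ^ (5 * (n - 1)) - 1 :=
            le_of_lt (shift2_iter_lt (hl2 hn) (Ult hn sol hwt d) k)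
          exact Nat.mul_le_mul hd2 hit
      _ ≤ 5 * (2 ^ (n + 1) * (2 ^ (5 * (n - 1)) - 1)) := by
          have := card_supp (n := n) (U := U) hwt
          rw [smul_eq_mul]
          exact Nat.mul_le_mul_right _ this
  have hpow : 5 * 2 ^ (n + 1) ≤ 2 ^ (n + 4) := by
    have e : (2:ℕ) ^ (n + 4) = 2 ^ (n + 1) * 2 ^ 3 := by rw [← pow_add]
    rw [e]
    calc 5 * 2 ^ (n+1) ≤ 2 ^ 3 * 2 ^ (n+1) := Nat.mul_le_mul_right _ (by norm_num)
      _ = 2 ^ (n+1) * 2 ^ 3 := by ring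
  have heq := MM_eq hn sol hwt k
  have hfin : (2 ^ (5 * (n - 1)) - 1) * supportMap (oddD n) (5 * (n - 1)) U k
      ≤ (2 ^ (5 * (n - 1)) - 1) * 2 ^ (n + 4) := by
    rw [heq]
    calc TT n U k ≤ 5 * (2 ^ (n + 1) * (2 ^ (5 * (n - 1)) - 1)) := hTle
      _ = (5 * 2 ^ (n + 1)) * (2 ^ (5 * (n - 1)) - 1) := by ring
      _ ≤ 2 ^ (n + 4) * (2 ^ (5 * (n - 1)) - 1) := Nat.mul_le_mul_right _ hpow
      _ = (2 ^ (5 * (n - 1)) - 1) * 2 ^ (n + 4) := by ring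
  exact Nat.le_of_mul_le_mul_left hfin (by omega)

lemma step_eq (hn : 100 ≤ n) {v : ℕ} (hv : v < 2 ^ (5 * (n - 1)) - 1) :
    shift2 (5 * (n - 1)) v + (if 2 ^ (5 * (n - 1) - 1) ≤ v then 2 ^ (5 * (n - 1)) - 1 else 0)
      = 2 * v := by
  have h4 : 4 ≤ 2 ^ (5 * (n - 1)) := NN4 hn
  have h2 : (2:ℕ) ^ (5 * (n - 1)) = 2 * 2 ^ (5 * (n - 1) - 1) := by
    rw [← pow_succ']; congr 1; omega
  rw [shift2_eq hv]
  rcases Nat.lt_or_ge v (2 ^ (5 * (n - 1) - 1)) with h | h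
  · rw [if_neg (by omega)]
    have : 2 * v < 2 ^ (5 * (n - 1)) - 1 := by omega
    rw [Nat.mod_eq_of_lt this]
    omega
  · rw [if_pos h]
    have hge : 2 ^ (5 * (n - 1)) - 1 ≤ 2 * v := by omega
    have hlt : 2 * v - (2 ^ (5 * (n - 1)) - 1) < 2 ^ (5 * (n - 1)) - 1 := by omega
    rw [Nat.mod_eq_sub_mod hge, Nat.mod_eq_of_lt hlt]
    omega

lemma TT_rec (hn : 100 ≤ n) (sol : IsSolution (oddD n) (5 * (n - 1)) U)
    (hwt : weight (oddD n) U = 5) (k : ℕ) :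
    TT n U (k + 1) + (2 ^ (5 * (n - 1)) - 1) * CC n U k = 2 * TT n U k := by
  rw [TT, TT, CC, Finset.mul_sum, ← Finset.sum_add_distrib, Finset.mul_sum]
  apply Finset.sum_congr rfl
  intro d _
  have hvlt : (shift2 (5 * (n - 1)))^[k] (U d) < 2 ^ (5 * (n - 1)) - 1 :=
    shift2_iter_lt (hl2 hn) (Ult hn sol hwt d) k
  rw [Function.iterate_succ_apply']
  have := step_eq hn hvlt
  set v := (shift2 (5 * (n - 1)))^[k] (U d)
  rcases Nat.lt_or_ge v (2 ^ (5 * (n - 1) - 1)) with h | h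
  · rw [if_neg (by omega)] at this ⊢
    calc d * shift2 (5 * (n - 1)) v + (2 ^ (5 * (n - 1)) - 1) * (d * 0)
        = d * (shift2 (5 * (n - 1)) v + 0) := by ring
      _ = d * (2 * v) := by rw [← this]
      _ = 2 * (d * v) := by ring
  · rw [if_pos h] at this ⊢
    calc d * shift2 (5 * (n - 1)) v + (2 ^ (5 * (n - 1)) - 1) * (d * 1)
        = d * (shift2 (5 * (n - 1)) v + (2 ^ (5 * (n - 1)) - 1)) := by ring
      _ = d * (2 * v) := by rw [← this]
      _ = 2 * (d * v) := by ring

lemma MM_rec (hn : 100 ≤ n) (sol : IsSolution (oddD n) (5 * (n - 1)) U)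
    (hwt : weight (oddD n) U = 5) (k : ℕ) :
    supportMap (oddD n) (5 * (n - 1)) U (k + 1) + CC n U k
      = 2 * supportMap (oddD n) (5 * (n - 1)) U k := by
  have h4 : 4 ≤ 2 ^ (5 * (n - 1)) := NN4 hn
  apply Nat.eq_of_mul_eq_mul_left (show 0 < 2 ^ (5 * (n - 1)) - 1 by omega)
  rw [Nat.mul_add, MM_eq hn sol hwt, Nat.mul_comm (2 ^ (5 * (n - 1)) - 1) (2 * _),
    Nat.mul_assoc, Nat.mul_comm _ (2 ^ (5 * (n - 1)) - 1), MM_eq hn sol hwt]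
  exact TT_rec hn sol hwt k

lemma MM_per (hn : 100 ≤ n) (sol : IsSolution (oddD n) (5 * (n - 1)) U)
    (hwt : weight (oddD n) U = 5) (k : ℕ) :
    supportMap (oddD n) (5 * (n - 1)) U (k + 5 * (n - 1))
      = supportMap (oddD n) (5 * (n - 1)) U k := by
  unfold supportMap
  congr 1
  apply Finset.sum_congr rfl
  intro d _
  rw [shift2_period (hl2 hn) (Ult hn sol hwt d) k]

lemma CC_per (hn : 100 ≤ n) (sol : IsSolution (oddD n) (5 * (n - 1)) U)
    (hwt : weight (oddD n) U = 5) (k : ℕ) :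
    CC n U (k + 5 * (n - 1)) = CC n U k := by
  unfold CC
  apply Finset.sum_congr rfl
  intro d _
  rw [shift2_period (hl2 hn) (Ult hn sol hwt d) k]

lemma II_per (hn : 100 ≤ n) (sol : IsSolution (oddD n) (5 * (n - 1)) U)
    (hwt : weight (oddD n) U = 5) (k : ℕ) :
    II n U (k + 5 * (n - 1)) = II n U k := by
  unfold II
  apply Finset.sum_congr rfl
  intro d _
  rw [shift2_period (hl2 hn) (Ult hn sol hwt d) k]

lemma II_sum (hn : 100 ≤ n) (sol : IsSolution (oddD n) (5 * (n - 1)) U)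
    (hwt : weight (oddD n) U = 5) :
    ∑ k ∈ Finset.range (5 * (n - 1)), II n U k = 5 := by
  unfold II
  rw [Finset.sum_comm]
  have h1 : ∀ d ∈ oddD n, (∑ k ∈ Finset.range (5 * (n - 1)),
      if 2 ^ (5 * (n - 1) - 1) ≤ (shift2 (5 * (n - 1)))^[k] (U d) then 1 else 0) = s2 (U d) :=
    fun d _ => shift2_topcount (hl2 hn) (Ult hn sol hwt d)
  rw [Finset.sum_congr rfl h1]
  unfold weight at hwt
  exact hwt

lemma CC_zero_iff (hn : 100 ≤ n) (k : ℕ) : CC n U k = 0 ↔ II n U k = 0 := by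
  unfold CC II
  rw [Finset.sum_eq_zero_iff, Finset.sum_eq_zero_iff]
  constructor
  · intro h d hd
    have h2 := h d hd
    have hd1 : 1 ≤ d := (mem_oddD hd).2.1
    rcases Nat.mul_eq_zero.mp h2 with h3 | h3
    · omega
    · exact h3
  · intro h d hd
    rw [h d hd, Nat.mul_zero]

end Mid

def gfun (a : ℕ) : ℕ :=
  (if a = 1 then 4 else 0) + (if a = 3 then 2 else 0) + (if a = 5 then 1 else 0)
    + (if a = 7 then 1 else 0)

lemma ind5 (c w a0 a1 a2 a3 a4 : ℕ) (h01 : a0 ≠ a1) (h02 : a0 ≠ a2) (h03 : a0 ≠ a3)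
    (h04 : a0 ≠ a4) (h12 : a1 ≠ a2) (h13 : a1 ≠ a3) (h14 : a1 ≠ a4) (h23 : a2 ≠ a3)
    (h24 : a2 ≠ a4) (h34 : a3 ≠ a4) :
    (if a0 = c then w else 0) + (if a1 = c then w else 0) + (if a2 = c then w else 0)
      + (if a3 = c then w else 0) + (if a4 = c then w else 0) ≤ w := by
  split_ifs <;> omega

lemma gfun_sum (a0 a1 a2 a3 a4 : ℕ) (h01 : a0 ≠ a1) (h02 : a0 ≠ a2) (h03 : a0 ≠ a3)
    (h04 : a0 ≠ a4) (h12 : a1 ≠ a2) (h13 : a1 ≠ a3) (h14 : a1 ≠ a4) (h23 : a2 ≠ a3)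
    (h24 : a2 ≠ a4) (h34 : a3 ≠ a4) :
    gfun a0 + gfun a1 + gfun a2 + gfun a3 + gfun a4 ≤ 8 := by
  have H1 := ind5 1 4 a0 a1 a2 a3 a4 h01 h02 h03 h04 h12 h13 h14 h23 h24 h34
  have H3 := ind5 3 2 a0 a1 a2 a3 a4 h01 h02 h03 h04 h12 h13 h14 h23 h24 h34
  have H5 := ind5 5 1 a0 a1 a2 a3 a4 h01 h02 h03 h04 h12 h13 h14 h23 h24 h34
  have H7 := ind5 7 1 a0 a1 a2 a3 a4 h01 h02 h03 h04 h12 h13 h14 h23 h24 h34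
  unfold gfun
  omega

lemma pow_mono' {a b : ℕ} (h : a ≤ b) : (2:ℕ) ^ a ≤ 2 ^ b := Nat.pow_le_pow_right (by norm_num) h

lemma key_bound {n g a a' c : ℕ} (hn : 100 ≤ n) (heq : a' + c = 2 ^ g * a)
    (hodd : a % 2 = 1) (ha' : a' ≤ 2 ^ 30) (hc1 : 1 ≤ c) (hc : c ≤ 2 ^ (n + 1) - 3) :
    g ≤ n - 3 + gfun a := by
  have hY : (2:ℕ) ^ 30 ≤ 2 ^ (n - 2) := pow_mono' (by omega)
  have e : (2:ℕ) ^ n = 2 ^ (n - 2) * 4 := by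
    rw [show (4:ℕ) = 2 ^ 2 from rfl, ← pow_add]; congr 1; omega
  by_contra hcon
  push_neg at hcon
  by_cases h1 : a = 1
  · subst h1
    have hg : n + 2 ≤ g := by simp [gfun] at hcon; omega
    have hp : (2:ℕ) ^ (n + 2) ≤ 2 ^ g := pow_mono' hg
    have e2 : (2:ℕ) ^ (n + 2) = 2 ^ (n - 2) * 16 := by
      rw [show (16:ℕ) = 2 ^ 4 from rfl, ← pow_add]; congr 1; omega
    rw [mul_one] at heq
    omega
  · by_cases h3 : a = 3
    · subst h3
      have hg : n ≤ g := by simp [gfun, h1] at hcon; omega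
      have hp : (2:ℕ) ^ n ≤ 2 ^ g := pow_mono' hg
      have h33 : 2 ^ n * 3 ≤ 2 ^ g * 3 := Nat.mul_le_mul_right _ hp
      omega
    · by_cases h5 : a = 5
      · subst h5
        have hg : n - 1 ≤ g := by simp [gfun, h1, h3] at hcon; omega
        have hp : (2:ℕ) ^ (n - 1) ≤ 2 ^ g := pow_mono' hg
        have e1 : (2:ℕ) ^ (n - 1) = 2 ^ (n - 2) * 2 := by rw [← pow_succ]; congr 1; omega
        have h55 : 2 ^ (n - 1) * 5 ≤ 2 ^ g * 5 := Nat.mul_le_mul_right _ hp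
        omega
      · by_cases h7 : a = 7
        · subst h7
          have hg : n - 1 ≤ g := by simp [gfun, h1, h3, h5] at hcon; omega
          have hp : (2:ℕ) ^ (n - 1) ≤ 2 ^ g := pow_mono' hg
          have e1 : (2:ℕ) ^ (n - 1) = 2 ^ (n - 2) * 2 := by rw [← pow_succ]; congr 1; omega
          have h77 : 2 ^ (n - 1) * 7 ≤ 2 ^ g * 7 := Nat.mul_le_mul_right _ hp
          omega
        · have h9 : 9 ≤ a := by omega
          have hg : n - 2 ≤ g := by simp [gfun, h1, h3, h5, h7] at hcon; omega
          have hp : (2:ℕ) ^ (n - 2) ≤ 2 ^ g := pow_mono' hg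
          have h99 : 2 ^ (n - 2) * 9 ≤ 2 ^ g * a := Nat.mul_le_mul hp h9
          omega

lemma CC_single {n : ℕ} {U : ℕ → ℕ} (hn : 100 ≤ n) (k : ℕ) (h1 : II n U k = 1) :
    CC n U k % 2 = 1 ∧ 1 ≤ CC n U k ∧ CC n U k ≤ 2 ^ (n + 1) - 3 := by
  set F := (oddD n).filter
    (fun d => 2 ^ (5 * (n - 1) - 1) ≤ (shift2 (5 * (n - 1)))^[k] (U d)) with hF
  have hcard : F.card = 1 := by
    rw [hF, Finset.card_filter]
    exact h1
  obtain ⟨d0, hd0⟩ := Finset.card_eq_one.mp hcard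
  have hCeq : CC n U k = d0 := by
    rw [CC]
    have hct : ∀ d ∈ oddD n,
        d * (if 2 ^ (5 * (n - 1) - 1) ≤ (shift2 (5 * (n - 1)))^[k] (U d) then 1 else 0)
          = if 2 ^ (5 * (n - 1) - 1) ≤ (shift2 (5 * (n - 1)))^[k] (U d) then d else 0 := by
      intro d _
      split <;> simp
    rw [Finset.sum_congr rfl hct, ← Finset.sum_filter, ← hF, hd0, Finset.sum_singleton]
  have hd0D : d0 ∈ oddD n := by
    have hm : d0 ∈ F := by rw [hd0]; exact Finset.mem_singleton_self d0
    exact (Finset.mem_filter.mp hm).1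
  obtain ⟨ho, h1', hle⟩ := mem_oddD hd0D
  rw [hCeq]
  exact ⟨ho, h1', hle⟩

lemma main (n : ℕ) (hn : 100 ≤ n) (U : ℕ → ℕ)
    (sol : IsSolution (oddD n) (5 * (n - 1)) U)
    (irr : IrreducibleSol (oddD n) (5 * (n - 1)) U)
    (hwt : weight (oddD n) U = 5) : False := by
  obtain ⟨M, hM⟩ : ∃ M : ℕ → ℕ, M = supportMap (oddD n) (5 * (n - 1)) U := ⟨_, rfl⟩
  obtain ⟨C, hC⟩ : ∃ C : ℕ → ℕ, C = CC n U := ⟨_, rfl⟩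
  obtain ⟨I, hI⟩ : ∃ I : ℕ → ℕ, I = II n U := ⟨_, rfl⟩
  have hLpos : 495 ≤ 5 * (n - 1) := by omega
  have hM1 : ∀ k, 1 ≤ M k := by rw [hM]; exact MM_one hn sol hwt
  have hMle : ∀ k, M k ≤ 2 ^ (n + 4) := by rw [hM]; exact MM_le hn sol hwt
  have hrec : ∀ k, M (k + 1) + C k = 2 * M k := by rw [hM, hC]; exact MM_rec hn sol hwt
  have hMper : ∀ k, M (k + 5 * (n - 1)) = M k := by rw [hM]; exact MM_per hn sol hwt
  have hCper : ∀ k, C (k + 5 * (n - 1)) = C k := by rw [hC]; exact CC_per hn sol hwt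
  have hIper : ∀ k, I (k + 5 * (n - 1)) = I k := by rw [hI]; exact II_per hn sol hwt
  have hIsum : ∑ k ∈ Finset.range (5 * (n - 1)), I k = 5 := by rw [hI]; exact II_sum hn sol hwt
  have hCIz : ∀ k, C k = 0 ↔ I k = 0 := by rw [hC, hI]; exact fun k => CC_zero_iff hn k
  have hCsingle : ∀ k, I k = 1 → C k % 2 = 1 ∧ 1 ≤ C k ∧ C k ≤ 2 ^ (n + 1) - 3 := by
    rw [hC, hI]; exact fun k => CC_single hn k
  -- periodicity extended
  have hMmul : ∀ q k, M (k + 5 * (n - 1) * q) = M k := by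
    intro q
    induction q with
    | zero => intro k; simp
    | succ q ih =>
      intro k
      have e : k + 5 * (n - 1) * (q + 1) = (k + 5 * (n - 1) * q) + 5 * (n - 1) := by ring
      rw [e, hMper, ih]
  have hMmod : ∀ x, M (x % (5 * (n - 1))) = M x := by
    intro x
    have h1 := hMmul (x / (5 * (n - 1))) (x % (5 * (n - 1)))
    rw [Nat.mod_add_div] at h1
    exact h1.symm
  have hImul : ∀ q k, I (k + 5 * (n - 1) * q) = I k := by
    intro q
    induction q with
    | zero => intro k; simp
    | succ q ih =>
      intro k
      have e : k + 5 * (n - 1) * (q + 1) = (k + 5 * (n - 1) * q) + 5 * (n - 1) := by ring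
      rw [e, hIper, ih]
  have hImod : ∀ x, I (x % (5 * (n - 1))) = I x := by
    intro x
    have h1 := hImul (x / (5 * (n - 1))) (x % (5 * (n - 1)))
    rw [Nat.mod_add_div] at h1
    exact h1.symm
  -- doubling along C-free stretches
  have hdouble : ∀ g k, (∀ t, t < g → C (k + t) = 0) → M (k + g) = 2 ^ g * M k := by
    intro g
    induction g with
    | zero => intro k h; simp
    | succ g ih =>
      intro k h
      have h1 := ih k (fun t ht => h t (by omega))
      have h2 := hrec (k + g)
      have h3 := h g (by omega)
      have e : k + (g + 1) = (k + g) + 1 := by omega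
      rw [e]
      have h4 : M ((k + g) + 1) = 2 * M (k + g) := by omega
      rw [h4, h1, pow_succ]
      ring
  -- C must be hit within n+5 steps
  have hhit : ∀ k, ∃ t, t < n + 5 ∧ C (k + t) ≠ 0 := by
    intro k
    by_contra hcon
    push_neg at hcon
    have hdd := hdouble (n + 5) k hcon
    have hb := hMle (k + (n + 5))
    have h1 := hM1 k
    have h2 : (2:ℕ) ^ (n + 5) ≤ 2 ^ (n + 5) * M k := Nat.le_mul_of_pos_right _ (by omega)
    have e : (2:ℕ) ^ (n + 5) = 2 ^ (n + 4) * 2 := by rw [← pow_succ]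
    have hp : 1 ≤ (2:ℕ) ^ (n + 4) := Nat.one_le_two_pow
    omega
  -- the support K of C (equivalently I) within one period
  set K := (Finset.range (5 * (n - 1))).filter (fun k => I k ≠ 0) with hK
  have hKsum : ∑ k ∈ K, I k = 5 := by
    rw [hK, Finset.sum_filter_ne_zero, hIsum]
  have hKle : K.card ≤ 5 := by
    have h1 : K.card = ∑ _k ∈ K, 1 := by rw [Finset.card_eq_sum_ones]
    have h2 : ∑ k ∈ K, 1 ≤ ∑ k ∈ K, I k := by
      apply Finset.sum_le_sum
      intro k hk
      have := (Finset.mem_filter.mp hk).2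
      omega
    omega
  have hcover : Finset.range (5 * (n - 1)) ⊆
      K.biUnion (fun κ => (Finset.range (n + 5)).image
        (fun t => (κ + 5 * (n - 1) - t) % (5 * (n - 1)))) := by
    intro k hk
    rw [Finset.mem_range] at hk
    rw [Finset.mem_biUnion]
    obtain ⟨t, ht, hCt⟩ := hhit k
    have hIt : I (k + t) ≠ 0 := fun h => hCt ((hCIz (k + t)).mpr h)
    refine ⟨(k + t) % (5 * (n - 1)), ?_, ?_⟩
    · rw [hK, Finset.mem_filter, Finset.mem_range]
      refine ⟨Nat.mod_lt _ (by omega), ?_⟩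
      rw [hImod]
      exact hIt
    · rw [Finset.mem_image]
      refine ⟨t, Finset.mem_range.mpr ht, ?_⟩
      have h2L : k + t < 2 * (5 * (n - 1)) := by omega
      have hdivlt : (k + t) / (5 * (n - 1)) < 2 :=
        (Nat.div_lt_iff_lt_mul (by omega : 0 < 5 * (n - 1))).mpr (by omega)
      have hr := Nat.mod_add_div (k + t) (5 * (n - 1))
      rcases Nat.le_one_iff_eq_zero_or_eq_one.mp (by omega : (k + t) / (5 * (n - 1)) ≤ 1) with hq | hq
      · rw [hq, Nat.mul_zero, Nat.add_zero] at hr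
        have e2 : (k + t) % (5 * (n - 1)) + 5 * (n - 1) - t = k + 5 * (n - 1) := by omega
        rw [e2, Nat.add_mod_right]
        exact Nat.mod_eq_of_lt hk
      · rw [hq, Nat.mul_one] at hr
        have e2 : (k + t) % (5 * (n - 1)) + 5 * (n - 1) - t = k := by omega
        rw [e2]
        exact Nat.mod_eq_of_lt hk
  have hKcard : K.card = 5 := by
    have h1 : 5 * (n - 1) ≤ K.card * (n + 5) := by
      calc 5 * (n - 1) = (Finset.range (5 * (n - 1))).card := (Finset.card_range _).symm
        _ ≤ (K.biUnion (fun κ => (Finset.range (n + 5)).image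
              (fun t => (κ + 5 * (n - 1) - t) % (5 * (n - 1))))).card :=
            Finset.card_le_card hcover
        _ ≤ ∑ κ ∈ K, ((Finset.range (n + 5)).image
              (fun t => (κ + 5 * (n - 1) - t) % (5 * (n - 1)))).card :=
            Finset.card_biUnion_le
        _ ≤ ∑ _κ ∈ K, (n + 5) := by
            apply Finset.sum_le_sum
            intro κ _
            calc ((Finset.range (n + 5)).image
                  (fun t => (κ + 5 * (n - 1) - t) % (5 * (n - 1)))).card
                ≤ (Finset.range (n + 5)).card := Finset.card_image_le
              _ = n + 5 := Finset.card_range _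
        _ = K.card * (n + 5) := by rw [Finset.sum_const, smul_eq_mul]
    rcases (by omega : K.card = 5 ∨ K.card ≤ 4) with h | h
    · exact h
    · exfalso
      have h2 : K.card * (n + 5) ≤ 4 * (n + 5) := Nat.mul_le_mul_right _ h
      omega
  have hIone : ∀ k ∈ K, I k = 1 := by
    by_contra hcon
    push_neg at hcon
    obtain ⟨k0, hk0K, hk0⟩ := hcon
    have hge2 : 2 ≤ I k0 := by
      have := (Finset.mem_filter.mp hk0K).2
      omega
    have hsplit : ∑ k ∈ K.erase k0, I k + I k0 = 5 := by
      rw [Finset.sum_erase_add K I hk0K]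
      exact hKsum
    have hcard4 : (K.erase k0).card = 4 := by
      rw [Finset.card_erase_of_mem hk0K, hKcard]
    have h4 : 4 ≤ ∑ k ∈ K.erase k0, I k := by
      calc (4:ℕ) = ∑ _k ∈ K.erase k0, 1 := by rw [← Finset.card_eq_sum_ones, hcard4]
        _ ≤ ∑ k ∈ K.erase k0, I k := by
            apply Finset.sum_le_sum
            intro k hk
            have hkK := Finset.mem_of_mem_erase hk
            have := (Finset.mem_filter.mp hkK).2
            omega
    omega
  -- enumerate K
  have e5 := K.orderIsoOfFin hKcard
  obtain ⟨κ, hκ⟩ : ∃ κ : Fin 5 → ℕ, κ = fun i => (e5 i : ℕ) := ⟨_, rfl⟩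
  have hmono : ∀ i j : Fin 5, i < j → κ i < κ j := by
    intro i j hij
    rw [hκ]
    exact Subtype.coe_lt_coe.mpr (e5.strictMono hij)
  have hle : ∀ i j : Fin 5, i ≤ j → κ i ≤ κ j := by
    intro i j hij
    rcases eq_or_lt_of_le hij with h | h
    · rw [h]
    · exact le_of_lt (hmono i j h)
  have hmemK : ∀ i : Fin 5, κ i ∈ K := by
    intro i; rw [hκ]; exact (e5 i).2
  have hκL : ∀ i : Fin 5, κ i < 5 * (n - 1) := by
    intro i
    have := hmemK i
    rw [hK, Finset.mem_filter, Finset.mem_range] at this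
    exact this.1
  have hsurj : ∀ x ∈ K, ∃ i : Fin 5, κ i = x := by
    intro x hx
    refine ⟨e5.symm ⟨x, hx⟩, ?_⟩
    rw [hκ]
    simp
  -- no element of K strictly between consecutive κ's
  have hnotbet : ∀ (st : Fin 5 × Fin 5), (∀ i : Fin 5, ¬(st.1 < i ∧ i < st.2)) →
      ∀ x, κ st.1 < x → x < κ st.2 → C x = 0 := by
    intro st hst x hsx hxt
    have hxL : x < 5 * (n - 1) := lt_trans hxt (hκL st.2)
    by_contra hCx
    have hIx : I x ≠ 0 := fun h => hCx ((hCIz x).mpr h)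
    have hxK : x ∈ K := by
      rw [hK, Finset.mem_filter, Finset.mem_range]; exact ⟨hxL, hIx⟩
    obtain ⟨i, rfl⟩ := hsurj x hxK
    refine hst i ⟨?_, ?_⟩
    · by_contra hc
      push_neg at hc
      have := hle i st.1 hc
      omega
    · by_contra hc
      push_neg at hc
      have := hle st.2 i hc
      omega
  have hCz_wrap : ∀ x, κ 4 < x → x < κ 0 + 5 * (n - 1) → C x = 0 := by
    intro x h4x hx0
    rcases Nat.lt_or_ge x (5 * (n - 1)) with hxL | hxL
    · by_contra hCx
      have hIx : I x ≠ 0 := fun h => hCx ((hCIz x).mpr h)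
      have hxK : x ∈ K := by
        rw [hK, Finset.mem_filter, Finset.mem_range]; exact ⟨hxL, hIx⟩
      obtain ⟨i, rfl⟩ := hsurj x hxK
      have : κ i ≤ κ 4 := hle i 4 (by
        have := i.isLt
        rw [Fin.le_def]
        omega)
      omega
    · have e : x = (x - 5 * (n - 1)) + 5 * (n - 1) := by omega
      rw [e, hCper]
      by_contra hCx
      have hIx : I (x - 5 * (n - 1)) ≠ 0 := fun h => hCx ((hCIz _).mpr h)
      have hy : x - 5 * (n - 1) < 5 * (n - 1) := by
        have := hκL 0
        omega
      have hxK : x - 5 * (n - 1) ∈ K := by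
        rw [hK, Finset.mem_filter, Finset.mem_range]; exact ⟨hy, hIx⟩
      obtain ⟨i, hi⟩ := hsurj _ hxK
      have h0i : κ 0 ≤ κ i := hle 0 i (by
        rw [Fin.le_def]
        omega)
      omega
  -- segment doubling equation
  have hseg : ∀ p q, p < q → (∀ x, p < x → x < q → C x = 0) →
      M (q + 1) + C q = 2 ^ (q - p) * M (p + 1) := by
    intro p q hpq hz
    have hd := hdouble (q - 1 - p) (p + 1) (fun t ht => hz (p + 1 + t) (by omega) (by omega))
    have e1 : p + 1 + (q - 1 - p) = q := by omega
    rw [e1] at hd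
    have h2 := hrec q
    rw [hd] at h2
    have e2 : (2:ℕ) ^ (q - p) = 2 * 2 ^ (q - 1 - p) := by
      rw [← pow_succ']; congr 1; omega
    rw [e2]
    calc M (q + 1) + C q = 2 * (2 ^ (q - 1 - p) * M (p + 1)) := h2
      _ = 2 * 2 ^ (q - 1 - p) * M (p + 1) := by ring
  have E1 : M (κ 1 + 1) + C (κ 1) = 2 ^ (κ 1 - κ 0) * M (κ 0 + 1) :=
    hseg (κ 0) (κ 1) (hmono 0 1 (by decide))
      (fun x h1 h2 => hnotbet (0, 1) (by decide) x h1 h2)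
  have E2 : M (κ 2 + 1) + C (κ 2) = 2 ^ (κ 2 - κ 1) * M (κ 1 + 1) :=
    hseg (κ 1) (κ 2) (hmono 1 2 (by decide))
      (fun x h1 h2 => hnotbet (1, 2) (by decide) x h1 h2)
  have E3 : M (κ 3 + 1) + C (κ 3) = 2 ^ (κ 3 - κ 2) * M (κ 2 + 1) :=
    hseg (κ 2) (κ 3) (hmono 2 3 (by decide))
      (fun x h1 h2 => hnotbet (2, 3) (by decide) x h1 h2)
  have E4 : M (κ 4 + 1) + C (κ 4) = 2 ^ (κ 4 - κ 3) * M (κ 3 + 1) :=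
    hseg (κ 3) (κ 4) (hmono 3 4 (by decide))
      (fun x h1 h2 => hnotbet (3, 4) (by decide) x h1 h2)
  have E5' : M (κ 0 + 5 * (n - 1) + 1) + C (κ 0 + 5 * (n - 1))
      = 2 ^ (κ 0 + 5 * (n - 1) - κ 4) * M (κ 4 + 1) :=
    hseg (κ 4) (κ 0 + 5 * (n - 1)) (by have := hκL 4; omega) hCz_wrap
  have E5 : M (κ 0 + 1) + C (κ 0) = 2 ^ (κ 0 + 5 * (n - 1) - κ 4) * M (κ 4 + 1) := by
    have eM : κ 0 + 5 * (n - 1) + 1 = (κ 0 + 1) + 5 * (n - 1) := by omega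
    rw [eM, hMper, hCper] at E5'
    exact E5'
  -- facts about the C-values
  have hcfact : ∀ i : Fin 5, C (κ i) % 2 = 1 ∧ 1 ≤ C (κ i) ∧ C (κ i) ≤ 2 ^ (n + 1) - 3 :=
    fun i => hCsingle (κ i) (hIone (κ i) (hmemK i))
  -- oddness of the M-values
  have hoddgen : ∀ x c' g y : ℕ, 1 ≤ g → x + c' = 2 ^ g * y → c' % 2 = 1 → x % 2 = 1 := by
    intro x c' g y hg heq hc
    have e : 2 ^ g * y = 2 * (2 ^ (g - 1) * y) := by
      rw [← mul_assoc, ← pow_succ']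
      congr 2
      omega
    omega
  have hodd0 : M (κ 0 + 1) % 2 = 1 :=
    hoddgen _ _ _ _ (by have := hκL 4; omega) E5 (hcfact 0).1
  have hodd1 : M (κ 1 + 1) % 2 = 1 :=
    hoddgen _ _ _ _ (by have := hmono 0 1 (by decide); omega) E1 (hcfact 1).1
  have hodd2 : M (κ 2 + 1) % 2 = 1 :=
    hoddgen _ _ _ _ (by have := hmono 1 2 (by decide); omega) E2 (hcfact 2).1
  have hodd3 : M (κ 3 + 1) % 2 = 1 :=
    hoddgen _ _ _ _ (by have := hmono 2 3 (by decide); omega) E3 (hcfact 3).1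
  have hodd4 : M (κ 4 + 1) % 2 = 1 :=
    hoddgen _ _ _ _ (by have := hmono 3 4 (by decide); omega) E4 (hcfact 4).1
  -- distinctness of the M-values
  have hinj2 : ∀ x y, x < 5 * (n - 1) → y < 5 * (n - 1) → M (x + 1) = M (y + 1) → x = y := by
    intro x y hx hy heq
    have hx1 := hMmod (x + 1)
    have hy1 := hMmod (y + 1)
    have hmemx : ((x + 1) % (5 * (n - 1)) : ℕ) ∈ (↑(Finset.range (5 * (n - 1))) : Set ℕ) := by
      rw [Finset.mem_coe, Finset.mem_range]
      exact Nat.mod_lt _ (by omega)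
    have hmemy : ((y + 1) % (5 * (n - 1)) : ℕ) ∈ (↑(Finset.range (5 * (n - 1))) : Set ℕ) := by
      rw [Finset.mem_coe, Finset.mem_range]
      exact Nat.mod_lt _ (by omega)
    have hre : (x + 1) % (5 * (n - 1)) = (y + 1) % (5 * (n - 1)) := by
      apply irr hmemx hmemy
      rw [← hM, hx1, hy1, heq]
    by_cases hxL2 : x + 1 = 5 * (n - 1) <;> by_cases hyL2 : y + 1 = 5 * (n - 1)
    · omega
    · exfalso
      rw [hxL2, Nat.mod_self, Nat.mod_eq_of_lt (by omega)] at hre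
      omega
    · exfalso
      rw [hyL2, Nat.mod_self, Nat.mod_eq_of_lt (by omega)] at hre
      omega
    · rw [Nat.mod_eq_of_lt (by omega), Nat.mod_eq_of_lt (by omega)] at hre
      omega
  have hdist : ∀ i j : Fin 5, i ≠ j → M (κ i + 1) ≠ M (κ j + 1) := by
    intro i j hij heq
    have := hinj2 (κ i) (κ j) (hκL i) (hκL j) heq
    rcases lt_trichotomy i j with h | h | h
    · have := hmono i j h; omega
    · exact hij h
    · have := hmono j i h; omega
  -- gamma bounds
  have hgle : ∀ (g x y c' : ℕ), x + c' = 2 ^ g * y → 1 ≤ y → x ≤ 2 ^ (n + 4) →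
      c' ≤ 2 ^ (n + 1) - 3 → g ≤ n + 5 := by
    intro g x y c' heq hy hx hc'
    have h1 : (2:ℕ) ^ g ≤ 2 ^ g * y := Nat.le_mul_of_pos_right _ (by omega)
    have h2 : (2:ℕ) ^ (n + 1) ≤ 2 ^ (n + 4) := pow_mono' (by omega)
    have h3 : (2:ℕ) ^ (n + 5) = 2 ^ (n + 4) * 2 := by rw [← pow_succ]
    by_contra hcon
    push_neg at hcon
    have h5 := pow_mono' (show n + 5 + 1 ≤ g by omega)
    have h6 : (2:ℕ) ^ (n + 5 + 1) = 2 ^ (n + 5) * 2 := by rw [← pow_succ]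
    have hp : 1 ≤ (2:ℕ) ^ (n + 5) := Nat.one_le_two_pow
    omega
  have hg1 : κ 1 - κ 0 ≤ n + 5 := hgle _ _ _ _ E1 (hM1 _) (hMle _) (hcfact 1).2.2
  have hg2 : κ 2 - κ 1 ≤ n + 5 := hgle _ _ _ _ E2 (hM1 _) (hMle _) (hcfact 2).2.2
  have hg3 : κ 3 - κ 2 ≤ n + 5 := hgle _ _ _ _ E3 (hM1 _) (hMle _) (hcfact 3).2.2
  have hg4 : κ 4 - κ 3 ≤ n + 5 := hgle _ _ _ _ E4 (hM1 _) (hMle _) (hcfact 4).2.2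
  have hg5 : κ 0 + 5 * (n - 1) - κ 4 ≤ n + 5 := hgle _ _ _ _ E5 (hM1 _) (hMle _) (hcfact 0).2.2
  have hord : κ 0 < κ 1 ∧ κ 1 < κ 2 ∧ κ 2 < κ 3 ∧ κ 3 < κ 4 :=
    ⟨hmono 0 1 (by decide), hmono 1 2 (by decide), hmono 2 3 (by decide), hmono 3 4 (by decide)⟩
  have hgsum : (κ 1 - κ 0) + (κ 2 - κ 1) + (κ 3 - κ 2) + (κ 4 - κ 3)
      + (κ 0 + 5 * (n - 1) - κ 4) = 5 * (n - 1) := by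
    have := hκL 4
    omega
  -- each M-value is at most 2^30
  have hgena : ∀ (g x y c' : ℕ), x + c' = 2 ^ g * y → n - 25 ≤ g → x ≤ 2 ^ (n + 4) →
      c' ≤ 2 ^ (n + 1) - 3 → y ≤ 2 ^ 30 := by
    intro g x y c' heq hg hx hc'
    have h1 : (2:ℕ) ^ (n - 25) * y ≤ 2 ^ g * y := Nat.mul_le_mul_right _ (pow_mono' hg)
    have h2 : (2:ℕ) ^ (n + 5) = 2 ^ (n - 25) * 2 ^ 30 := by rw [← pow_add]; congr 1; omega
    have h2' : (2:ℕ) ^ (n + 1) ≤ 2 ^ (n + 4) := pow_mono' (by omega)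
    have h3 : (2:ℕ) ^ (n + 5) = 2 ^ (n + 4) * 2 := by rw [← pow_succ]
    have h4 : (2:ℕ) ^ (n - 25) * y ≤ 2 ^ (n - 25) * 2 ^ 30 := by omega
    exact Nat.le_of_mul_le_mul_left h4 (by positivity)
  have hb0 : M (κ 0 + 1) ≤ 2 ^ 30 :=
    hgena _ _ _ _ E1 (by omega) (hMle _) (hcfact 1).2.2
  have hb1 : M (κ 1 + 1) ≤ 2 ^ 30 :=
    hgena _ _ _ _ E2 (by omega) (hMle _) (hcfact 2).2.2
  have hb2 : M (κ 2 + 1) ≤ 2 ^ 30 :=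
    hgena _ _ _ _ E3 (by omega) (hMle _) (hcfact 3).2.2
  have hb3 : M (κ 3 + 1) ≤ 2 ^ 30 :=
    hgena _ _ _ _ E4 (by omega) (hMle _) (hcfact 4).2.2
  have hb4 : M (κ 4 + 1) ≤ 2 ^ 30 :=
    hgena _ _ _ _ E5 (by omega) (hMle _) (hcfact 0).2.2
  -- sharp per-segment bounds
  have hk1 : κ 1 - κ 0 ≤ n - 3 + gfun (M (κ 0 + 1)) :=
    key_bound hn E1 hodd0 hb1 (hcfact 1).2.1 (hcfact 1).2.2
  have hk2 : κ 2 - κ 1 ≤ n - 3 + gfun (M (κ 1 + 1)) :=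
    key_bound hn E2 hodd1 hb2 (hcfact 2).2.1 (hcfact 2).2.2
  have hk3 : κ 3 - κ 2 ≤ n - 3 + gfun (M (κ 2 + 1)) :=
    key_bound hn E3 hodd2 hb3 (hcfact 3).2.1 (hcfact 3).2.2
  have hk4 : κ 4 - κ 3 ≤ n - 3 + gfun (M (κ 3 + 1)) :=
    key_bound hn E4 hodd3 hb4 (hcfact 4).2.1 (hcfact 4).2.2
  have hk5 : κ 0 + 5 * (n - 1) - κ 4 ≤ n - 3 + gfun (M (κ 4 + 1)) :=
    key_bound hn E5 hodd4 hb0 (hcfact 0).2.1 (hcfact 0).2.2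
  have hgs := gfun_sum (M (κ 0 + 1)) (M (κ 1 + 1)) (M (κ 2 + 1)) (M (κ 3 + 1)) (M (κ 4 + 1))
    (hdist 0 1 (by decide)) (hdist 0 2 (by decide)) (hdist 0 3 (by decide))
    (hdist 0 4 (by decide)) (hdist 1 2 (by decide)) (hdist 1 3 (by decide))
    (hdist 1 4 (by decide)) (hdist 2 3 (by decide)) (hdist 2 4 (by decide))
    (hdist 3 4 (by decide))
  omega


/-- For `n` large enough and `D = {i : 1 ≤ i ≤ 2^{n+1} − 3, i odd}`, there is no
irreducible solution of weight `5` and length `5(n−1)` (density `1/(n−1)`). -/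
theorem no_weight_five_density_solutions :
    ∃ N : ℕ, ∀ n : ℕ, N ≤ n →
      ¬∃ U : ℕ → ℕ, IsSolution (oddD n) (5 * (n - 1)) U ∧
        IrreducibleSol (oddD n) (5 * (n - 1)) U ∧ weight (oddD n) U = 5 := by
  refine ⟨100, fun n hn => ?_⟩
  rintro ⟨U, sol, irr, hwt⟩
  exact main n hn U sol irr hwt
end

section
/- There exists N such that for all n ≥ N the following holds for D = {i : 1 ≤ i ≤ 2^{n+1} − 3, i odd}: the irreducible solutions for D of weight 1 and length n−1 are exactly, up to shift, the following two: the solution with u_{2^{n−1}−1} = 1 (all other u_d = 0), and the solution with u_{3·2^{n−1}−3} = 1 (all other u_d = 0). -/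
lemma s2_def (m : ℕ) (h : m ≠ 0) : s2 m = m % 2 + s2 (m / 2) := by
  unfold s2
  rw [Nat.digits_def' (by norm_num : 1 < 2) (Nat.pos_of_ne_zero h)]
  simp

lemma s2_eq_zero_iff (m : ℕ) : s2 m = 0 ↔ m = 0 := by
  constructor
  · induction m using Nat.strong_induction_on with
    | _ m ih =>
      intro h
      rcases Nat.eq_zero_or_pos m with h0 | h0
      · exact h0
      · rw [s2_def m h0.ne'] at h
        have h2 : m / 2 = 0 := ih (m / 2) (by omega) (by omega)
        omega
  · rintro rfl; simp [s2]

lemma s2_eq_one : ∀ m, s2 m = 1 → ∃ j, m = 2 ^ j := by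
  intro m
  induction m using Nat.strong_induction_on with
  | _ m ih =>
    intro h
    have hm : m ≠ 0 := by rintro rfl; simp [s2] at h
    rw [s2_def m hm] at h
    by_cases hp : m % 2 = 1
    · have h0 : s2 (m / 2) = 0 := by omega
      have := (s2_eq_zero_iff _).mp h0
      exact ⟨0, by omega⟩
    · have h1 : s2 (m / 2) = 1 := by omega
      obtain ⟨j, hj⟩ := ih (m / 2) (by omega) h1
      refine ⟨j + 1, ?_⟩
      rw [pow_succ, ← hj]
      omega

lemma s2_one : s2 1 = 1 := by simp [s2]

lemma shift2_iter_zero (ℓ k : ℕ) (hℓ : 1 ≤ ℓ) : (shift2 ℓ)^[k] 0 = 0 := by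
  induction k with
  | zero => rfl
  | succ k ih =>
    rw [Function.iterate_succ_apply', ih]
    have h2 : 2 ≤ 2 ^ ℓ := by
      calc 2 = 2 ^ 1 := rfl
      _ ≤ 2 ^ ℓ := Nat.pow_le_pow_right (by norm_num) hℓ
    unfold shift2
    rw [if_neg (by omega)]
    simp

lemma shift2_iter_one (ℓ : ℕ) (hℓ : 2 ≤ ℓ) : ∀ k, k < ℓ → (shift2 ℓ)^[k] 1 = 2 ^ k := by
  have hP : 4 ≤ 2 ^ ℓ := by
    calc (4:ℕ) = 2 ^ 2 := rfl
    _ ≤ 2 ^ ℓ := Nat.pow_le_pow_right (by norm_num) hℓ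
  intro k
  induction k with
  | zero => intro _; rfl
  | succ k ih =>
    intro hk
    rw [Function.iterate_succ_apply', ih (by omega)]
    have hlt : 2 ^ (k + 1) ≤ 2 ^ (ℓ - 1) := Nat.pow_le_pow_right (by norm_num) (by omega)
    have hhalf : 2 * 2 ^ (ℓ - 1) = 2 ^ ℓ := by
      rw [← pow_succ']
      congr 1
      omega
    unfold shift2
    rw [if_neg (by rw [pow_succ] at hlt; omega)]
    rw [pow_succ]
    rw [Nat.mod_eq_of_lt (by rw [pow_succ] at hlt; omega)]
    ring

lemma sum_sol1 (D : Finset ℕ) (a : ℕ) (ha : a ∈ D) (f : ℕ → ℕ) (hf : f 0 = 0) :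
    ∑ d ∈ D, d * f (sol1 a d) = a * f 1 := by
  rw [Finset.sum_eq_single a]
  · simp [sol1]
  · intro b _ hba; simp [sol1, hba, hf]
  · intro h; exact absurd ha h

lemma sum_sol1' (D : Finset ℕ) (a : ℕ) (ha : a ∈ D) :
    ∑ d ∈ D, d * sol1 a d = a := by
  have h := sum_sol1 D a ha (fun x => x) rfl
  simpa using h

lemma mem_oddUpTo {a c : ℕ} : a ∈ oddUpTo c ↔ a < c + 1 ∧ a % 2 = 1 := by
  simp [oddUpTo]

lemma main_lemma (ℓ : ℕ) (hℓ : 2 ≤ ℓ) :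
    (IsSolution (oddUpTo (4 * 2 ^ ℓ - 3)) ℓ (sol1 (2 ^ ℓ - 1)) ∧
      IrreducibleSol (oddUpTo (4 * 2 ^ ℓ - 3)) ℓ (sol1 (2 ^ ℓ - 1)) ∧
      weight (oddUpTo (4 * 2 ^ ℓ - 3)) (sol1 (2 ^ ℓ - 1)) = 1) ∧
    (IsSolution (oddUpTo (4 * 2 ^ ℓ - 3)) ℓ (sol1 (3 * 2 ^ ℓ - 3)) ∧
      IrreducibleSol (oddUpTo (4 * 2 ^ ℓ - 3)) ℓ (sol1 (3 * 2 ^ ℓ - 3)) ∧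
      weight (oddUpTo (4 * 2 ^ ℓ - 3)) (sol1 (3 * 2 ^ ℓ - 3)) = 1) ∧
    (∀ U, IsSolution (oddUpTo (4 * 2 ^ ℓ - 3)) ℓ U →
      IrreducibleSol (oddUpTo (4 * 2 ^ ℓ - 3)) ℓ U →
      weight (oddUpTo (4 * 2 ^ ℓ - 3)) U = 1 →
      IsShiftOf ℓ U (sol1 (2 ^ ℓ - 1)) ∨ IsShiftOf ℓ U (sol1 (3 * 2 ^ ℓ - 3))) := by
  set D := oddUpTo (4 * 2 ^ ℓ - 3) with hD
  have hP : 4 ≤ 2 ^ ℓ := by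
    calc (4:ℕ) = 2 ^ 2 := rfl
    _ ≤ 2 ^ ℓ := Nat.pow_le_pow_right (by norm_num) hℓ
  have hpar : 2 ^ ℓ % 2 = 0 := by
    have : 2 * 2 ^ (ℓ - 1) = 2 ^ ℓ := by
      rw [← pow_succ']; congr 1; omega
    omega
  have hM1 : (2 ^ ℓ - 1) ∈ D := by rw [hD, mem_oddUpTo]; omega
  have hM3 : (3 * 2 ^ ℓ - 3) ∈ D := by rw [hD, mem_oddUpTo]; omega
  -- generic facts about sol1 a for a ∈ D
  have key : ∀ a ∈ D, a % (2 ^ ℓ - 1) = 0 → 0 < a →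
      IsSolution D ℓ (sol1 a) ∧ weight D (sol1 a) = 1 ∧
      ∀ k, k < ℓ → supportMap D ℓ (sol1 a) k = a / (2 ^ ℓ - 1) * 2 ^ k := by
    intro a ha hmod hapos
    refine ⟨⟨by omega, ?_, ?_, ?_, ?_⟩, ?_, ?_⟩
    · intro d
      unfold sol1
      split <;> omega
    · intro d hd
      unfold sol1
      rw [if_neg]
      rintro rfl
      exact hd ha
    · rw [sum_sol1' D a ha]
      exact Nat.dvd_of_mod_eq_zero hmod
    · rw [sum_sol1' D a ha]
      omega
    · unfold weight
      rw [Finset.sum_eq_single a]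
      · simp [sol1, s2_one]
      · intro b _ hba; simp [sol1, hba, s2]
      · intro h; exact absurd ha h
    · intro k hk
      unfold supportMap
      rw [sum_sol1 D a ha ((shift2 ℓ)^[k]) (shift2_iter_zero ℓ k (by omega)),
        shift2_iter_one ℓ hℓ k hk]
      obtain ⟨q, hq⟩ := Nat.dvd_of_mod_eq_zero hmod
      rw [hq, mul_assoc, Nat.mul_div_cancel_left _ (by omega : 0 < 2 ^ ℓ - 1),
        Nat.mul_div_cancel_left _ (by omega : 0 < 2 ^ ℓ - 1)]
  have irr : ∀ a ∈ D, a % (2 ^ ℓ - 1) = 0 → 0 < a → IrreducibleSol D ℓ (sol1 a) := by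
    intro a ha hmod hapos
    obtain ⟨_, _, hsup⟩ := key a ha hmod hapos
    intro x hx y hy hxy
    simp only [Finset.coe_range, Set.mem_Iio] at hx hy
    rw [hsup x hx, hsup y hy] at hxy
    have hq : 0 < a / (2 ^ ℓ - 1) := Nat.div_pos (Nat.le_of_dvd hapos (Nat.dvd_of_mod_eq_zero hmod)) (by omega)
    have h2 : (2:ℕ) ^ x = 2 ^ y := by
      exact Nat.eq_of_mul_eq_mul_left hq hxy
    exact Nat.pow_right_injective (le_refl 2) h2
  have hmod3 : (3 * 2 ^ ℓ - 3) % (2 ^ ℓ - 1) = 0 := by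
    have h3 : 3 * 2 ^ ℓ - 3 = 3 * (2 ^ ℓ - 1) := by omega
    rw [h3]
    exact Nat.mul_mod_left 3 _
  have k1 := key _ hM1 (Nat.mod_self _) (by omega)
  have k3 := key _ hM3 hmod3 (by omega)
  refine ⟨⟨k1.1, irr _ hM1 (Nat.mod_self _) (by omega), k1.2.1⟩,
    ⟨k3.1, irr _ hM3 hmod3 (by omega), k3.2.1⟩, ?_⟩
  intro U hU _ hw
  -- find the unique support point
  unfold weight at hw
  have hex : ∃ d ∈ D, s2 (U d) ≠ 0 := by
    by_contra hc
    push_neg at hc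
    rw [Finset.sum_eq_zero (fun d hd => by simpa using hc d hd)] at hw
    omega
  obtain ⟨d₀, hd₀, hs₀⟩ := hex
  have hsplit : s2 (U d₀) + ∑ d ∈ D.erase d₀, s2 (U d) = ∑ d ∈ D, s2 (U d) :=
    Finset.add_sum_erase D (fun d => s2 (U d)) hd₀
  have hs1 : s2 (U d₀) = 1 := by omega
  have hrest : ∀ d ∈ D.erase d₀, s2 (U d) = 0 := by
    intro d hd
    have h0 : ∑ d ∈ D.erase d₀, s2 (U d) = 0 := by omega
    exact (Finset.sum_eq_zero_iff).mp h0 d hd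
  have hUzero : ∀ d, d ≠ d₀ → U d = 0 := by
    intro d hd
    by_cases hdD : d ∈ D
    · exact (s2_eq_zero_iff _).mp (hrest d (Finset.mem_erase.mpr ⟨hd, hdD⟩))
    · exact hU.supp_sub d hdD
  obtain ⟨j, hj⟩ := s2_eq_one _ hs1
  have hsum : ∑ d ∈ D, d * U d = d₀ * 2 ^ j := by
    rw [Finset.sum_eq_single d₀]
    · rw [hj]
    · intro b _ hb; rw [hUzero b hb, mul_zero]
    · intro h; exact absurd hd₀ h
  have hdvd : (2 ^ ℓ - 1) ∣ d₀ * 2 ^ j := by rw [← hsum]; exact hU.dvd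
  have hModd : (2 ^ ℓ - 1) % 2 = 1 := by omega
  have hcop : Nat.Coprime (2 ^ ℓ - 1) 2 := by
    rw [Nat.coprime_two_right, Nat.odd_iff]
    exact hModd
  have hMd : (2 ^ ℓ - 1) ∣ d₀ := (hcop.pow_right j).dvd_of_dvd_mul_right hdvd
  obtain ⟨t, ht⟩ := hMd
  rw [hD, mem_oddUpTo] at hd₀
  have ht4 : t ≤ 4 := by
    by_contra hc
    have h5 : (2 ^ ℓ - 1) * 5 ≤ (2 ^ ℓ - 1) * t := Nat.mul_le_mul_left _ (by omega)
    rw [← ht] at h5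
    omega
  have hjl : j < ℓ := by
    have hb := hU.bounded d₀
    rw [hj] at hb
    by_contra hc
    have : 2 ^ ℓ ≤ 2 ^ j := Nat.pow_le_pow_right (by norm_num) (by omega)
    omega
  have hform : ∀ a, d₀ = a → IsShiftOf ℓ U (sol1 a) := by
    rintro a rfl
    refine ⟨j, fun d => ?_⟩
    unfold sol1
    by_cases hda : d = d₀
    · rw [if_pos hda, hda, hj, shift2_iter_one ℓ hℓ j hjl]
    · rw [if_neg hda, hUzero d hda, shift2_iter_zero ℓ j (by omega)]
  interval_cases t
  · omega
  · left; exact hform _ (by omega)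
  · omega
  · right; exact hform _ (by omega)
  · omega

/-- For `n` large enough and `D = {i : 1 ≤ i ≤ 2^{n+1} − 3, i odd}`, the irreducible
solutions of weight `1` and length `n−1` are exactly, up to shift,
`1·(2^{n−1} − 1)` and `1·(3·2^{n−1} − 3)`. -/
theorem weight_one_length_n_sub_one_solutions :
    ∃ N : ℕ, ∀ n : ℕ, N ≤ n →
      (IsSolution (oddD n) (n - 1) (sol1 (2 ^ (n - 1) - 1)) ∧
        IrreducibleSol (oddD n) (n - 1) (sol1 (2 ^ (n - 1) - 1)) ∧
        weight (oddD n) (sol1 (2 ^ (n - 1) - 1)) = 1) ∧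
      (IsSolution (oddD n) (n - 1) (sol1 (3 * 2 ^ (n - 1) - 3)) ∧
        IrreducibleSol (oddD n) (n - 1) (sol1 (3 * 2 ^ (n - 1) - 3)) ∧
        weight (oddD n) (sol1 (3 * 2 ^ (n - 1) - 3)) = 1) ∧
      (∀ U, IsSolution (oddD n) (n - 1) U → IrreducibleSol (oddD n) (n - 1) U →
        weight (oddD n) U = 1 →
        IsShiftOf (n - 1) U (sol1 (2 ^ (n - 1) - 1)) ∨
        IsShiftOf (n - 1) U (sol1 (3 * 2 ^ (n - 1) - 3))) := by
  refine ⟨3, fun n hn => ?_⟩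
  have hpow : 2 ^ (n + 1) = 4 * 2 ^ (n - 1) := by
    have h1 : n + 1 = (n - 1) + 2 := by omega
    rw [h1, pow_add]
    ring
  have hodd : oddD n = oddUpTo (4 * 2 ^ (n - 1) - 3) := by
    rw [oddD, hpow]
  rw [hodd]
  exact main_lemma (n - 1) (by omega)
end

section
/- There exists N such that for all n ≥ N the following holds for D = {i : 1 ≤ i ≤ 2^{n+1} − 3, i odd}: the irreducible solutions for D of weight 2 and length 2n−2 are exactly, up to shift, the following solutions of length 2n−2: (1) for each odd i with 3 ≤ i ≤ 15: u_{2^{n+1}−i} = 2^{n−3}, u_{i·2^{n−3}−1} = 1 (all other u_d = 0); (2) for each i ∈ {3, 5, 7}: u_{2^{n}−i} = 2^{n−2}, u_{i·2^{n−2}−1} = 1 (all other u_d = 0); (3) u_{2^{n−1}−3} = 2^{n−1}, u_{3·2^{n−1}−1} = 1 (all other u_d = 0). (In each case ∑ d·u_d = 2^{2n−2} − 1.) -/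
/-!
A weight-two solution has either one coordinate with two bits or two coordinates with one bit
each. In both cases `∑ d·δ^k(u_d) = d₁·2^{e₁+k} + d₂·2^{e₂+k}` (exponents mod `ℓ`), and shifting
the bit of `d₂`, resp. of `d₁`, to position `0` produces two values `m`, `i` of the support map
with `m·(2^ℓ-1) = d₁·2^a + d₂` and `i·(2^ℓ-1) = d₁ + d₂·2^{ℓ-a}`, i.e.
`m·2^{ℓ-a} = d₁ + i` and `i·2^a = d₂ + m`. Irreducibility gives `m ≠ i`, say `m < i`. As `d₁, d₂`
are odd and below `2^{n+1}` while `ℓ = 2n-2`, this forces `m = 1`, `a ∈ {n-3, n-2, n-1}` and `i` in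
the listed range, so that `d₁ = 2^{ℓ-a} - i` and `d₂ = i·2^a - 1`. These two numbers differ, which
rules out the one-coordinate case.
-/

lemma s2_eq_length_bitIndices (m : ℕ) : s2 m = m.bitIndices.length := by
  induction m using Nat.binaryRec with
  | zero => simp [s2]
  | bit b n ih =>
    rcases Nat.eq_zero_or_pos n with rfl | hn
    · cases b <;> simp [s2]
    cases b
    · rw [Nat.bit_false, Nat.bitIndices_two_mul, List.length_map, ← ih, s2, s2,
        Nat.digits_def' one_lt_two (n := 2 * n) (by omega)]
      simp
    · rw [Nat.bit_true, Nat.bitIndices_two_mul_add_one, List.length_cons, List.length_map, ← ih,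
        s2, s2, Nat.digits_def' one_lt_two (n := 2 * n + 1) (by omega)]
      simp [Nat.add_mul_div_left, add_comm]

lemma s2_two_pow (e : ℕ) : s2 (2 ^ e) = 1 := by
  simp [s2_eq_length_bitIndices]

lemma eq_zero_of_s2_eq_zero {x : ℕ} (h : s2 x = 0) : x = 0 := by
  rw [← Nat.sum_map_two_pow_bitIndices x, List.eq_nil_of_length_eq_zero
    ((s2_eq_length_bitIndices x).symm.trans h)]
  rfl

lemma exists_eq_two_pow_of_s2_eq_one {x : ℕ} (h : s2 x = 1) : ∃ e, x = 2 ^ e := by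
  rw [s2_eq_length_bitIndices, List.length_eq_one_iff] at h
  obtain ⟨e, he⟩ := h
  exact ⟨e, by rw [← Nat.sum_map_two_pow_bitIndices x, he]; simp⟩

lemma exists_eq_two_pow_add_two_pow_of_s2_eq_two {x : ℕ} (h : s2 x = 2) :
    ∃ e₁ e₂, e₁ < e₂ ∧ x = 2 ^ e₁ + 2 ^ e₂ := by
  rw [s2_eq_length_bitIndices, List.length_eq_two] at h
  obtain ⟨e₁, e₂, he⟩ := h
  have hsorted := (Nat.bitIndices_sorted (n := x)).pairwise
  rw [he] at hsorted
  exact ⟨e₁, e₂, by simpa using hsorted, by rw [← Nat.sum_map_two_pow_bitIndices x, he]; simp⟩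

lemma Finset.sum_eq_two_cases {ι : Type*} [DecidableEq ι] {s : Finset ι} {f : ι → ℕ}
    (h : ∑ i ∈ s, f i = 2) :
    (∃ a ∈ s, f a = 2 ∧ ∀ c ∈ s, c ≠ a → f c = 0) ∨
      ∃ a ∈ s, ∃ b ∈ s, a ≠ b ∧ f a = 1 ∧ f b = 1 ∧ ∀ c ∈ s, c ≠ a → c ≠ b → f c = 0 := by
  have hsum : ∑ i ∈ s.filter (f · ≠ 0), f i = 2 := by rw [Finset.sum_filter_ne_zero, h]
  have hmem : ∀ c, c ∈ s.filter (f · ≠ 0) ↔ c ∈ s ∧ f c ≠ 0 := fun c => Finset.mem_filter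
  generalize s.filter (f · ≠ 0) = t at hsum hmem
  have hcard : t.card ≤ 2 := by
    simpa [← hsum] using
      t.card_nsmul_le_sum f 1 fun i hi => Nat.one_le_iff_ne_zero.2 ((hmem i).1 hi).2
  have htne : t.Nonempty := Finset.nonempty_of_sum_ne_zero (by rw [hsum]; decide)
  interval_cases hc : t.card
  · exact absurd hc (Finset.card_pos.2 htne).ne'
  · obtain ⟨a, rfl⟩ := Finset.card_eq_one.1 hc
    obtain ⟨has, -⟩ := (hmem a).1 (by simp)
    refine Or.inl ⟨a, has, by simpa using hsum, fun c hc hca => ?_⟩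
    by_contra hfc
    exact hca (by simpa using (hmem c).2 ⟨hc, hfc⟩)
  · obtain ⟨a, b, hab, rfl⟩ := Finset.card_eq_two.1 hc
    obtain ⟨has, ha⟩ := (hmem a).1 (by simp)
    obtain ⟨hbs, hb⟩ := (hmem b).1 (by simp)
    rw [Finset.sum_pair hab] at hsum
    refine Or.inr ⟨a, has, b, hbs, hab, by omega, by omega, fun c hc hca hcb => ?_⟩
    by_contra hfc
    simpa [hca, hcb] using (hmem c).2 ⟨hc, hfc⟩

section Shift

variable {ℓ : ℕ}

lemma two_pow_modEq_two_pow_mod (ℓ e : ℕ) : 2 ^ e ≡ 2 ^ (e % ℓ) [MOD 2 ^ ℓ - 1] := by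
  have h : 2 ^ ℓ ≡ 1 [MOD 2 ^ ℓ - 1] := Nat.modEq_sub Nat.one_le_two_pow
  calc 2 ^ e = (2 ^ ℓ) ^ (e / ℓ) * 2 ^ (e % ℓ) := by rw [← pow_mul, ← pow_add, Nat.div_add_mod]
    _ ≡ 1 ^ (e / ℓ) * 2 ^ (e % ℓ) [MOD 2 ^ ℓ - 1] := (h.pow _).mul_right _
    _ = 2 ^ (e % ℓ) := by rw [one_pow, one_mul]

lemma two_pow_lt_mersenne {e : ℕ} (hℓ : 2 ≤ ℓ) (he : e < ℓ) : 2 ^ e < 2 ^ ℓ - 1 := by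
  have h1 : 2 ^ e ≤ 2 ^ (ℓ - 1) := Nat.pow_le_pow_right two_pos (by omega)
  have h2 : 2 ^ ℓ = 2 * 2 ^ (ℓ - 1) := by rw [← pow_succ']; congr 1; omega
  have h3 : 2 ≤ 2 ^ (ℓ - 1) := Nat.le_self_pow (by omega) 2
  omega

lemma two_pow_add_two_pow_lt_mersenne {e₁ e₂ : ℕ} (hℓ : 3 ≤ ℓ) (h₁ : e₁ < ℓ) (h₂ : e₂ < ℓ)
    (hne : e₁ ≠ e₂) : 2 ^ e₁ + 2 ^ e₂ < 2 ^ ℓ - 1 := by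
  wlog h : e₁ < e₂ generalizing e₁ e₂
  · rw [add_comm]; exact this h₂ h₁ hne.symm (by omega)
  have h1 : 2 ^ e₁ ≤ 2 ^ (ℓ - 2) := Nat.pow_le_pow_right two_pos (by omega)
  have h2 : 2 ^ e₂ ≤ 2 ^ (ℓ - 1) := Nat.pow_le_pow_right two_pos (by omega)
  have h3 : 2 ^ (ℓ - 1) = 2 * 2 ^ (ℓ - 2) := by rw [← pow_succ']; congr 1; omega
  have h4 : 2 ^ ℓ = 2 * 2 ^ (ℓ - 1) := by rw [← pow_succ']; congr 1; omega
  have h5 : 2 ≤ 2 ^ (ℓ - 2) := Nat.le_self_pow (by omega) 2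
  omega

lemma lt_of_two_pow_le_mersenne {e : ℕ} (h : 2 ^ e ≤ 2 ^ ℓ - 1) : e < ℓ :=
  (Nat.pow_lt_pow_iff_right one_lt_two).1 ((Nat.le_sub_one_iff_lt (by positivity)).1 h)

lemma shift2_zero_s10 : shift2 ℓ 0 = 0 := by
  simp [shift2]

lemma shift2_iterate_zero (k : ℕ) : (shift2 ℓ)^[k] 0 = 0 :=
  Function.iterate_fixed shift2_zero_s10 k

lemma shift2_lt_s10 {x : ℕ} (hx : x < 2 ^ ℓ - 1) : shift2 ℓ x < 2 ^ ℓ - 1 := by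
  rw [shift2, if_neg hx.ne]
  exact Nat.mod_lt _ (by omega)

lemma shift2_iterate_lt_s10 {x : ℕ} (hx : x < 2 ^ ℓ - 1) (k : ℕ) : (shift2 ℓ)^[k] x < 2 ^ ℓ - 1 := by
  induction k with
  | zero => exact hx
  | succ k ih => rw [Function.iterate_succ_apply']; exact shift2_lt_s10 ih

lemma shift2_modEq (x : ℕ) : shift2 ℓ x ≡ 2 * x [MOD 2 ^ ℓ - 1] := by
  unfold shift2
  split_ifs with h
  · rw [h]
    exact (Nat.modEq_zero_iff_dvd.2 dvd_rfl).trans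
      (Nat.modEq_zero_iff_dvd.2 (dvd_mul_left _ _)).symm
  · exact Nat.mod_modEq _ _

lemma shift2_iterate_modEq (x k : ℕ) :
    (shift2 ℓ)^[k] x ≡ 2 ^ k * x [MOD 2 ^ ℓ - 1] := by
  induction k with
  | zero => rw [pow_zero, one_mul]; rfl
  | succ k ih =>
    rw [Function.iterate_succ_apply', pow_succ', mul_assoc]
    exact (shift2_modEq _).trans (ih.mul_left 2)

lemma shift2_iterate_eq_of_modEq {x y k : ℕ} (hx : x < 2 ^ ℓ - 1) (hy : y < 2 ^ ℓ - 1)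
    (h : 2 ^ k * x ≡ y [MOD 2 ^ ℓ - 1]) : (shift2 ℓ)^[k] x = y :=
  Nat.ModEq.eq_of_lt_of_lt ((shift2_iterate_modEq x k).trans h) (shift2_iterate_lt_s10 hx k) hy

lemma shift2_iterate_two_pow {e : ℕ} (hℓ : 2 ≤ ℓ) (he : e < ℓ) (k : ℕ) :
    (shift2 ℓ)^[k] (2 ^ e) = 2 ^ ((e + k) % ℓ) :=
  shift2_iterate_eq_of_modEq (two_pow_lt_mersenne hℓ he)
    (two_pow_lt_mersenne hℓ (Nat.mod_lt _ (by omega)))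
    (by rw [← pow_add, add_comm k]; exact two_pow_modEq_two_pow_mod ℓ _)

lemma shift2_iterate_two_pow_add_two_pow {e₁ e₂ : ℕ} (hℓ : 3 ≤ ℓ) (h₁ : e₁ < ℓ) (h₂ : e₂ < ℓ)
    (hne : e₁ ≠ e₂) (k : ℕ) :
    (shift2 ℓ)^[k] (2 ^ e₁ + 2 ^ e₂) = 2 ^ ((e₁ + k) % ℓ) + 2 ^ ((e₂ + k) % ℓ) := by
  refine shift2_iterate_eq_of_modEq (two_pow_add_two_pow_lt_mersenne hℓ h₁ h₂ hne)
    (two_pow_add_two_pow_lt_mersenne hℓ (Nat.mod_lt _ (by omega)) (Nat.mod_lt _ (by omega))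
      fun h => hne ?_) ?_
  · exact (Nat.ModEq.add_right_cancel' k h).eq_of_lt_of_lt h₁ h₂
  · rw [mul_add, ← pow_add, ← pow_add, add_comm k, add_comm k]
    exact (two_pow_modEq_two_pow_mod ℓ _).add (two_pow_modEq_two_pow_mod ℓ _)

end Shift

section Sums

variable {D : Finset ℕ} {ℓ : ℕ} {U : ℕ → ℕ}

lemma sum_mul_shift2_iterate_eq_single {p : ℕ} (hp : p ∈ D) (hU : ∀ c ∈ D, c ≠ p → U c = 0)
    (k : ℕ) : ∑ d ∈ D, d * (shift2 ℓ)^[k] (U d) = p * (shift2 ℓ)^[k] (U p) :=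
  Finset.sum_eq_single_of_mem p hp fun c hc hcp => by
    rw [hU c hc hcp, shift2_iterate_zero, mul_zero]

lemma sum_mul_shift2_iterate_eq_add {p q : ℕ} (hp : p ∈ D) (hq : q ∈ D) (hpq : p ≠ q)
    (hU : ∀ c ∈ D, c ≠ p → c ≠ q → U c = 0) (k : ℕ) :
    ∑ d ∈ D, d * (shift2 ℓ)^[k] (U d) = p * (shift2 ℓ)^[k] (U p) + q * (shift2 ℓ)^[k] (U q) :=
  Finset.sum_eq_add_of_mem p q hp hq hpq fun c hc hcpq => by
    rw [hU c hc hcpq.1 hcpq.2, shift2_iterate_zero, mul_zero]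

end Sums

lemma IsSolution.dvd_sum_shift2_iterate {D : Finset ℕ} {ℓ : ℕ} {U : ℕ → ℕ}
    (hU : IsSolution D ℓ U) (k : ℕ) : 2 ^ ℓ - 1 ∣ ∑ d ∈ D, d * (shift2 ℓ)^[k] (U d) := by
  have h : ∑ d ∈ D, d * (shift2 ℓ)^[k] (U d) ≡ 2 ^ k * ∑ d ∈ D, d * U d [MOD 2 ^ ℓ - 1] := by
    rw [Finset.mul_sum]
    exact Nat.ModEq.sum fun d _ => by
      rw [mul_left_comm]; exact (shift2_iterate_modEq _ k).mul_left d
  exact (Nat.modEq_zero_iff_dvd.1 (h.trans (Nat.modEq_zero_iff_dvd.2 (hU.dvd.mul_left _))))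

lemma isShiftOf_sol2 {ℓ p q a e₁ e₂ : ℕ} {U : ℕ → ℕ} (hℓ : 2 ≤ ℓ) (hpq : p ≠ q)
    (hUp : U p = 2 ^ e₁) (hUq : U q = 2 ^ e₂) (hU : ∀ c, c ≠ p → c ≠ q → U c = 0) (ha : a < ℓ)
    (h₂ : e₂ < ℓ) (he : (a + e₂) % ℓ = e₁) : IsShiftOf ℓ U (sol2 p (2 ^ a) q 1) := by
  refine ⟨e₂, fun c => ?_⟩
  by_cases hcp : c = p
  · subst hcp
    rw [hUp, sol2, if_pos rfl, shift2_iterate_two_pow hℓ ha, he]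
  by_cases hcq : c = q
  · subst hcq
    rw [hUq, sol2, if_neg hcp, if_pos rfl, ← pow_zero 2, shift2_iterate_two_pow hℓ (by omega),
      zero_add, Nat.mod_eq_of_lt h₂]
  · rw [hU c hcp hcq, sol2, if_neg hcp, if_neg hcq, shift2_iterate_zero]

lemma mod_eq_iff_of_lt_two_mul {x y ℓ : ℕ} (hx : x < 2 * ℓ) (hy : y < ℓ) :
    x % ℓ = y ↔ x = y ∨ x = y + ℓ := by
  rcases lt_or_ge x ℓ with h | h
  · rw [Nat.mod_eq_of_lt h]; omega
  · rw [Nat.mod_eq_sub_mod h, Nat.mod_eq_of_lt (by omega)]; omega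

lemma mul_two_pow_eq_of_mul_mersenne {ℓ a α m i d₁ d₂ : ℕ} (haα : a + α = ℓ) (hℓ : ℓ ≠ 0)
    (hm : m * (2 ^ ℓ - 1) = d₁ * 2 ^ a + d₂) (hi : i * (2 ^ ℓ - 1) = d₁ + d₂ * 2 ^ α) :
    m * 2 ^ α = d₁ + i ∧ i * 2 ^ a = d₂ + m := by
  have hM : 2 ^ ℓ - 1 ≠ 0 := by have := Nat.one_lt_two_pow hℓ; omega
  have hpow : (2 : ℤ) ^ a * 2 ^ α = ((2 ^ ℓ - 1 : ℕ) : ℤ) + 1 := by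
    rw [← pow_add, haα, Nat.cast_sub Nat.one_le_two_pow]; push_cast; ring
  constructor <;> refine Nat.eq_of_mul_eq_mul_right (Nat.pos_of_ne_zero hM) ?_ <;> zify at hm hi ⊢
  · linear_combination (2 : ℤ) ^ α * hm - hi + (d₁ : ℤ) * hpow
  · linear_combination (2 : ℤ) ^ a * hi - hm + (d₂ : ℤ) * hpow

section TwoTerms

variable {D : Finset ℕ} {ℓ : ℕ} {U : ℕ → ℕ} {d₁ d₂ e₁ e₂ : ℕ}

lemma exists_support_values_of_two_terms (hU : IsSolution D ℓ U) (hirr : IrreducibleSol D ℓ U)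
    (h₁ : e₁ < ℓ) (h₂ : e₂ < ℓ) (hsmall : d₁ + d₂ < 2 ^ ℓ - 1)
    (hsum : ∀ k, ∑ d ∈ D, d * (shift2 ℓ)^[k] (U d) =
      d₁ * 2 ^ ((e₁ + k) % ℓ) + d₂ * 2 ^ ((e₂ + k) % ℓ)) :
    ∃ a m i, a ≠ 0 ∧ a < ℓ ∧ (a + e₂) % ℓ = e₁ ∧ (ℓ - a + e₁) % ℓ = e₂ ∧ m ≠ i ∧
      m * 2 ^ (ℓ - a) = d₁ + i ∧ i * 2 ^ a = d₂ + m := by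
  have hℓ : 0 < ℓ := by omega
  have hmod : ∀ {x y}, x < 2 * ℓ → y < ℓ → (x % ℓ = y ↔ x = y ∨ x = y + ℓ) :=
    mod_eq_iff_of_lt_two_mul
  obtain ⟨a, ha⟩ : ∃ a, (e₁ + (ℓ - e₂)) % ℓ = a := ⟨_, rfl⟩
  have haℓ : a < ℓ := ha ▸ Nat.mod_lt _ hℓ
  have hsplit := (hmod (by omega) haℓ).1 ha
  -- shifting by `ℓ - e₂`, resp. `ℓ - e₁`, moves the bit of `d₂`, resp. `d₁`, to position `0`
  have hS₀ := hsum ((ℓ - e₂) % ℓ)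
  have hS₁ := hsum ((ℓ - e₁) % ℓ)
  simp only [Nat.add_mod_mod] at hS₀ hS₁
  rw [ha, Nat.add_sub_cancel' h₂.le, Nat.mod_self, pow_zero, mul_one] at hS₀
  have ha₀ : a ≠ 0 := by
    rintro rfl
    have hdvd := hS₀ ▸ hU.dvd_sum_shift2_iterate ((ℓ - e₂) % ℓ)
    rw [pow_zero, mul_one] at hdvd
    have hd : d₁ = 0 ∧ d₂ = 0 := by have := Nat.eq_zero_of_dvd_of_lt hdvd hsmall; omega
    have hS := hsum 0
    simp only [Function.iterate_zero_apply, hd, zero_mul, add_zero] at hS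
    exact hU.pos.ne' hS
  rw [Nat.add_sub_cancel' h₁.le, Nat.mod_self,
    (hmod (x := e₂ + (ℓ - e₁)) (y := ℓ - a) (by omega) (by omega)).2 (by omega), pow_zero,
    mul_one] at hS₁
  have hm := Nat.div_mul_cancel (hS₀ ▸ hU.dvd_sum_shift2_iterate ((ℓ - e₂) % ℓ))
  have hi := Nat.div_mul_cancel (hS₁ ▸ hU.dvd_sum_shift2_iterate ((ℓ - e₁) % ℓ))
  have hne : supportMap D ℓ U ((ℓ - e₂) % ℓ) ≠ supportMap D ℓ U ((ℓ - e₁) % ℓ) := by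
    intro h
    have hk := hirr (by simpa using Nat.mod_lt _ hℓ) (by simpa using Nat.mod_lt _ hℓ) h
    have hk₂ := (hmod (by omega) (Nat.mod_lt _ hℓ)).1 (rfl : (ℓ - e₂) % ℓ = _)
    have hk₁ := (hmod (by omega) (Nat.mod_lt _ hℓ)).1 hk.symm
    omega
  rw [supportMap, supportMap, hS₀, hS₁] at hne
  obtain ⟨h₁', h₂'⟩ := mul_two_pow_eq_of_mul_mersenne (Nat.add_sub_cancel' haℓ.le) hℓ.ne' hm hi
  exact ⟨a, _, _, ha₀, haℓ, (hmod (by omega) h₁).2 (by omega),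
    (hmod (by omega) h₂).2 (by omega), hne, h₁', h₂'⟩

end TwoTerms

lemma two_pow_sub_ne_mul_two_pow_sub_one {a α i : ℕ} (hi : 3 ≤ i) (hia : i < 2 ^ a)
    (haα : a ≤ α) : 2 ^ α - i ≠ i * 2 ^ a - 1 := by
  intro h
  have hα : 2 ^ α = 2 ^ a * 2 ^ (α - a) := by rw [← pow_add, Nat.add_sub_cancel' haα]
  have hia' : i ≤ 2 ^ α := hα ▸ hia.le.trans (Nat.le_mul_of_pos_right _ (by positivity))
  have hpos : 1 ≤ i * 2 ^ a := Nat.one_le_iff_ne_zero.2 (by positivity)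
  rcases le_or_gt (2 ^ (α - a)) i with hle | hlt
  · have : 2 ^ a * 2 ^ (α - a) ≤ i * 2 ^ a := by rw [mul_comm]; exact Nat.mul_le_mul_right _ hle
    omega
  · have : (i + 1) * 2 ^ a ≤ 2 ^ a * 2 ^ (α - a) := by
      rw [mul_comm]; exact Nat.mul_le_mul_left _ hlt
    rw [add_mul, one_mul] at this
    omega

def familySol (α a i : ℕ) : ℕ → ℕ := sol2 (2 ^ α - i) (2 ^ a) (i * 2 ^ a - 1) 1

section FamilySol

variable {D : Finset ℕ} {ℓ α a i : ℕ}

lemma familySol_identities (haα : a + α = ℓ) (hi : 1 ≤ i) (hiα : i ≤ 2 ^ α) :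
    (2 ^ α - i) * 2 ^ a + (i * 2 ^ a - 1) = 2 ^ ℓ - 1 ∧
      (2 ^ α - i) + (i * 2 ^ a - 1) * 2 ^ α = i * (2 ^ ℓ - 1) := by
  subst haα
  have h1 : 1 ≤ i * 2 ^ a := Nat.one_le_iff_ne_zero.2 (by positivity)
  have h2 : 1 ≤ 2 ^ (a + α) := Nat.one_le_two_pow
  constructor <;> zify [hiα, h1, h2] <;> ring

lemma sum_mul_shift2_iterate_familySol (haα : a + α = ℓ) (ha : a ≠ 0) (hα : α ≠ 0)
    (hp : 2 ^ α - i ∈ D) (hq : i * 2 ^ a - 1 ∈ D) (hpq : 2 ^ α - i ≠ i * 2 ^ a - 1) (k : ℕ) :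
    ∑ d ∈ D, d * (shift2 ℓ)^[k] (familySol α a i d) =
      (2 ^ α - i) * 2 ^ ((a + k) % ℓ) + (i * 2 ^ a - 1) * 2 ^ (k % ℓ) := by
  rw [sum_mul_shift2_iterate_eq_add hp hq hpq fun c _ hcp hcq => by
    simp [familySol, sol2, hcp, hcq]]
  simp only [familySol, sol2, ↓reduceIte, if_neg hpq.symm]
  rw [shift2_iterate_two_pow (by omega) (by omega), ← pow_zero 2,
    shift2_iterate_two_pow (by omega) (by omega), zero_add]

lemma supportMap_familySol (haα : a + α = ℓ) (ha : a ≠ 0) (hα : α ≠ 0) (hi : 1 ≤ i)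
    (hiα : i ≤ 2 ^ α) (hp : 2 ^ α - i ∈ D) (hq : i * 2 ^ a - 1 ∈ D)
    (hpq : 2 ^ α - i ≠ i * 2 ^ a - 1) {k : ℕ} (hk : k < ℓ) :
    supportMap D ℓ (familySol α a i) k = if k < α then 2 ^ k else i * 2 ^ (k - α) := by
  obtain ⟨h₁, h₂⟩ := familySol_identities haα hi hiα
  have hM : 0 < 2 ^ ℓ - 1 := by have := Nat.one_lt_two_pow (n := ℓ) (by omega); omega
  rw [supportMap, sum_mul_shift2_iterate_familySol haα ha hα hp hq hpq, Nat.mod_eq_of_lt hk]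
  split_ifs with hkα
  · rw [Nat.mod_eq_of_lt (by omega), pow_add]
    calc ((2 ^ α - i) * (2 ^ a * 2 ^ k) + (i * 2 ^ a - 1) * 2 ^ k) / (2 ^ ℓ - 1)
        = 2 ^ k * (2 ^ ℓ - 1) / (2 ^ ℓ - 1) := by rw [← h₁]; ring_nf
      _ = 2 ^ k := Nat.mul_div_cancel _ hM
  · rw [show (a + k) % ℓ = k - α by
      rw [show a + k = k - α + ℓ by omega, Nat.add_mod_right, Nat.mod_eq_of_lt (by omega)],
      show 2 ^ k = 2 ^ α * 2 ^ (k - α) by rw [← pow_add]; congr 1; omega]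
    calc ((2 ^ α - i) * 2 ^ (k - α) + (i * 2 ^ a - 1) * (2 ^ α * 2 ^ (k - α))) / (2 ^ ℓ - 1)
        = i * 2 ^ (k - α) * (2 ^ ℓ - 1) / (2 ^ ℓ - 1) := by
          rw [mul_right_comm i, ← h₂]; ring_nf
      _ = i * 2 ^ (k - α) := Nat.mul_div_cancel _ hM

lemma familySol_irreducible (haα : a + α = ℓ) (ha : a ≠ 0) (hα : α ≠ 0) (hi : 3 ≤ i)
    (hiodd : i % 2 = 1) (hiα : i ≤ 2 ^ α) (hp : 2 ^ α - i ∈ D) (hq : i * 2 ^ a - 1 ∈ D)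
    (hpq : 2 ^ α - i ≠ i * 2 ^ a - 1) : IrreducibleSol D ℓ (familySol α a i) := by
  intro k hk k' hk' h
  simp only [Finset.coe_range, Set.mem_Iio] at hk hk'
  rw [supportMap_familySol haα ha hα (by omega) hiα hp hq hpq hk,
    supportMap_familySol haα ha hα (by omega) hiα hp hq hpq hk'] at h
  have hcop : Nat.Coprime 2 i := (Nat.coprime_two_left).2 (Nat.odd_iff.2 hiodd)
  have hne : ∀ j j', 2 ^ j ≠ i * 2 ^ j' := fun j j' h =>
    absurd (Nat.Coprime.eq_one_of_dvd (hcop.pow_left j).symm (Dvd.intro _ h.symm)) (by omega)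
  split_ifs at h with h₁ h₂ h₂
  · exact Nat.pow_right_injective le_rfl h
  · exact absurd h (hne _ _)
  · exact absurd h.symm (hne _ _)
  · have := Nat.pow_right_injective le_rfl (Nat.eq_of_mul_eq_mul_left (by omega) h)
    omega

lemma familySol_isSolution (haα : a + α = ℓ) (ha : a ≠ 0) (hα : α ≠ 0) (hi : 1 ≤ i)
    (hiα : i ≤ 2 ^ α) (hp : 2 ^ α - i ∈ D) (hq : i * 2 ^ a - 1 ∈ D)
    (hpq : 2 ^ α - i ≠ i * 2 ^ a - 1) : IsSolution D ℓ (familySol α a i) := by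
  have hsum : ∑ d ∈ D, d * familySol α a i d = 2 ^ ℓ - 1 := by
    simpa [Nat.mod_eq_of_lt (show a < ℓ by omega), (familySol_identities haα hi hiα).1] using
      sum_mul_shift2_iterate_familySol (ℓ := ℓ) haα ha hα hp hq hpq 0
  have ha' : 2 ^ a < 2 ^ ℓ - 1 := two_pow_lt_mersenne (by omega) (by omega)
  have h1 : 1 ≤ 2 ^ ℓ - 1 := Nat.one_le_two_pow.trans ha'.le
  refine ⟨by omega, fun d => ?_, fun d hd => ?_, hsum ▸ dvd_rfl, hsum ▸ h1⟩
  · unfold familySol sol2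
    split_ifs
    exacts [ha'.le, h1, Nat.zero_le _]
  · unfold familySol sol2
    rw [if_neg (by rintro rfl; exact hd hp), if_neg (by rintro rfl; exact hd hq)]

lemma weight_familySol (hp : 2 ^ α - i ∈ D) (hq : i * 2 ^ a - 1 ∈ D)
    (hpq : 2 ^ α - i ≠ i * 2 ^ a - 1) : weight D (familySol α a i) = 2 := by
  rw [weight, Finset.sum_eq_add_of_mem _ _ hp hq hpq fun c _ hc => by
    simp [familySol, sol2, hc.1, hc.2, s2]]
  simp only [familySol, sol2, ↓reduceIte, if_neg hpq.symm]
  rw [s2_two_pow, show s2 1 = 1 from s2_two_pow 0]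

end FamilySol

lemma mem_oddD_iff {n d : ℕ} : d ∈ oddD n ↔ d % 2 = 1 ∧ d ≤ 2 ^ (n + 1) - 3 := by
  rw [oddD, oddUpTo, Finset.mem_filter, Finset.mem_range]
  omega

def IsFamilyParam (n a i : ℕ) : Prop :=
  (a = n - 3 ∧ i ∈ ({3, 5, 7, 9, 11, 13, 15} : Finset ℕ)) ∨
    (a = n - 2 ∧ i ∈ ({3, 5, 7} : Finset ℕ)) ∨ (a = n - 1 ∧ i = 3)

lemma odd_of_mul_two_pow_eq {m α d i : ℕ} (hα : α ≠ 0) (hd : d % 2 = 1)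
    (h : m * 2 ^ α = d + i) : i % 2 = 1 := by
  have : 2 ∣ m * 2 ^ α := Dvd.dvd.mul_left (dvd_pow_self 2 hα) m
  omega

section MulTwoPowEq

variable {n a α m i d₁ d₂ : ℕ}

lemma exponent_bounds_of_mul_two_pow_eq (hn : 5 ≤ n) (haα : a + α = 2 * n - 2) (ha : a ≠ 0)
    (hd₁ : d₁ < 2 ^ (n + 1)) (hd₂ : d₂ < 2 ^ (n + 1)) (hm : m ≠ 0) (hi : 3 ≤ i) (hlt : m < i)
    (h₁ : m * 2 ^ α = d₁ + i) (h₂ : i * 2 ^ a = d₂ + m) : n - 3 ≤ a ∧ a ≤ n - 1 := by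
  have hN : 2 ^ (n + 1) = 2 * 2 ^ n := pow_succ' 2 n
  constructor
  · by_contra h
    have : 2 * 2 ^ (n + 1) ≤ 2 ^ α := by
      rw [← pow_succ']; exact Nat.pow_le_pow_right two_pos (by omega)
    have : 1 * (2 * 2 ^ (n + 1)) ≤ m * 2 ^ α := Nat.mul_le_mul (by omega) this
    have : i * 2 ≤ i * 2 ^ a := Nat.mul_le_mul_left i (Nat.le_self_pow ha 2)
    omega
  · by_contra h
    have : i * 2 ^ n ≤ i * 2 ^ a := Nat.mul_le_mul_left i (Nat.pow_le_pow_right two_pos (by omega))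
    have : 3 * 2 ^ n ≤ i * 2 ^ n := Nat.mul_le_mul_right _ hi
    have : i * 2 ^ 5 ≤ i * 2 ^ n := Nat.mul_le_mul_left i (Nat.pow_le_pow_right two_pos hn)
    omega

lemma isFamilyParam_of_mul_two_pow_eq (hn : 5 ≤ n) (haα : a + α = 2 * n - 2) (ha : a ≠ 0)
    (hα : α ≠ 0) (hd₁ : d₁ ∈ oddD n) (hd₂ : d₂ ∈ oddD n) (hlt : m < i)
    (h₁ : m * 2 ^ α = d₁ + i) (h₂ : i * 2 ^ a = d₂ + m) : m = 1 ∧ IsFamilyParam n a i := by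
  rw [mem_oddD_iff] at hd₁ hd₂
  have hm := odd_of_mul_two_pow_eq ha hd₂.1 h₂
  have hi := odd_of_mul_two_pow_eq hα hd₁.1 h₁
  obtain ⟨ha₁, ha₂⟩ := exponent_bounds_of_mul_two_pow_eq hn haα ha (by omega) (by omega) (by omega)
    (by omega) hlt h₁ h₂
  obtain ⟨t, ht, rfl⟩ : ∃ t ≤ 2, a = n - 3 + t := ⟨a - (n - 3), by omega, by omega⟩
  set X := 2 ^ (n - 3) with hX
  have hX4 : 4 ≤ X := by
    calc 4 = 2 ^ 2 := by norm_num
      _ ≤ X := Nat.pow_le_pow_right two_pos (by omega)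
  have hpow : ∀ t, 2 ^ (n - 3 + t) = 2 ^ t * X := fun t => by rw [pow_add, mul_comm]
  have hN : 2 ^ (n + 1) = 16 * X := by rw [show n + 1 = n - 3 + 4 by omega, hpow]; rfl
  have hd₁' : d₁ + 3 ≤ 16 * X := by omega
  have hd₂' : d₂ + 3 ≤ 16 * X := by omega
  rw [hpow, ← mul_assoc] at h₂
  rw [show α = n - 3 + (4 - t) by omega, hpow] at h₁
  have hm₁ : m = 1 := by
    by_contra hm₁
    have : 3 * X ≤ m * X := Nat.mul_le_mul_right _ (by omega)
    have : 5 * X ≤ i * X := Nat.mul_le_mul_right _ (by omega)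
    have : i * 4 ≤ i * X := Nat.mul_le_mul_left i hX4
    interval_cases t <;> norm_num at h₁ h₂ <;> linarith
  subst hm₁
  have hi₁₆ : i * 2 ^ t < 16 := Nat.lt_of_mul_lt_mul_right (a := X) (by omega)
  refine ⟨rfl, ?_⟩
  simp only [IsFamilyParam, Finset.mem_insert, Finset.mem_singleton]
  interval_cases t <;> omega

end MulTwoPowEq

section OddD

variable {n a α i : ℕ}

lemma IsFamilyParam.bounds (hn : 7 ≤ n) (h : IsFamilyParam n a i) :
    3 ≤ i ∧ i % 2 = 1 ∧ i < 2 ^ a ∧ n - 3 ≤ a ∧ a ≤ n - 1 ∧ i * 2 ^ a + 2 ≤ 2 ^ (n + 1) := by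
  have hX : 16 ≤ 2 ^ (n - 3) := by
    calc 16 = 2 ^ 4 := by norm_num
      _ ≤ 2 ^ (n - 3) := Nat.pow_le_pow_right two_pos (by omega)
  have hpow : ∀ t, 2 ^ (n - 3 + t) = 2 ^ t * 2 ^ (n - 3) := fun t => by rw [pow_add, mul_comm]
  have hN : 2 ^ (n + 1) = 16 * 2 ^ (n - 3) := by rw [show n + 1 = n - 3 + 4 by omega, hpow]; rfl
  rcases h with ⟨rfl, hi⟩ | ⟨rfl, hi⟩ | ⟨rfl, rfl⟩
  · simp only [Finset.mem_insert, Finset.mem_singleton] at hi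
    have : i * 2 ^ (n - 3) ≤ 15 * 2 ^ (n - 3) := Nat.mul_le_mul_right _ (by omega)
    refine ⟨by omega, by omega, by omega, le_rfl, by omega, by omega⟩
  · simp only [Finset.mem_insert, Finset.mem_singleton] at hi
    rw [show n - 2 = n - 3 + 1 by omega, hpow]
    have : i * (2 ^ 1 * 2 ^ (n - 3)) ≤ 7 * (2 * 2 ^ (n - 3)) := Nat.mul_le_mul (by omega) le_rfl
    refine ⟨by omega, by omega, by omega, by omega, by omega, by omega⟩
  · rw [show n - 1 = n - 3 + 2 by omega, hpow]
    refine ⟨by omega, by omega, by omega, by omega, by omega, by omega⟩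

lemma IsFamilyParam.mem_oddD (hn : 7 ≤ n) (haα : a + α = 2 * n - 2) (h : IsFamilyParam n a i) :
    2 ^ α - i ∈ oddD n ∧ i * 2 ^ a - 1 ∈ oddD n := by
  obtain ⟨hi3, hiodd, hia, ha₁, ha₂, hq⟩ := h.bounds hn
  have hα : 2 ^ α ≤ 2 ^ (n + 1) := Nat.pow_le_pow_right two_pos (by omega)
  have haα' : 2 ^ a ≤ 2 ^ α := Nat.pow_le_pow_right two_pos (by omega)
  have h2α : 2 ∣ 2 ^ α := dvd_pow_self 2 (by omega)
  have h2a : 2 ∣ i * 2 ^ a := (dvd_pow_self 2 (by omega)).mul_left i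
  rw [mem_oddD_iff, mem_oddD_iff]
  have hpos : 0 < i * 2 ^ a := by positivity
  omega

lemma IsFamilyParam.familySol_spec (hn : 7 ≤ n) (haα : a + α = 2 * n - 2)
    (h : IsFamilyParam n a i) :
    IsSolution (oddD n) (2 * n - 2) (familySol α a i) ∧
      IrreducibleSol (oddD n) (2 * n - 2) (familySol α a i) ∧
      weight (oddD n) (familySol α a i) = 2 := by
  obtain ⟨hi3, hiodd, hia, ha₁, ha₂, -⟩ := h.bounds hn
  obtain ⟨hp, hq⟩ := h.mem_oddD hn haα
  have hiα : i ≤ 2 ^ α := hia.le.trans (Nat.pow_le_pow_right two_pos (by omega))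
  have hpq := two_pow_sub_ne_mul_two_pow_sub_one hi3 hia (show a ≤ α by omega)
  exact ⟨familySol_isSolution haα (by omega) (by omega) (by omega) hiα hp hq hpq,
    familySol_irreducible haα (by omega) (by omega) hi3 hiodd hiα hp hq hpq,
    weight_familySol hp hq hpq⟩

lemma exists_familyParam_of_two_terms {U : ℕ → ℕ} {d₁ d₂ e₁ e₂ : ℕ} (hn : 7 ≤ n)
    (hU : IsSolution (oddD n) (2 * n - 2) U) (hirr : IrreducibleSol (oddD n) (2 * n - 2) U)
    (hd₁ : d₁ ∈ oddD n) (hd₂ : d₂ ∈ oddD n) (h₁ : e₁ < 2 * n - 2) (h₂ : e₂ < 2 * n - 2)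
    (hsum : ∀ k, ∑ d ∈ oddD n, d * (shift2 (2 * n - 2))^[k] (U d) =
      d₁ * 2 ^ ((e₁ + k) % (2 * n - 2)) + d₂ * 2 ^ ((e₂ + k) % (2 * n - 2))) :
    ∃ a i, IsFamilyParam n a i ∧
      ((d₁ = 2 ^ (2 * n - 2 - a) - i ∧ d₂ = i * 2 ^ a - 1 ∧ (a + e₂) % (2 * n - 2) = e₁) ∨
        (d₂ = 2 ^ (2 * n - 2 - a) - i ∧ d₁ = i * 2 ^ a - 1 ∧ (a + e₁) % (2 * n - 2) = e₂)) := by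
  have hsmall : d₁ + d₂ < 2 ^ (2 * n - 2) - 1 := by
    have : 2 ^ (n + 2) ≤ 2 ^ (2 * n - 2) := Nat.pow_le_pow_right two_pos (by omega)
    rw [mem_oddD_iff] at hd₁ hd₂
    rw [pow_succ] at this
    omega
  obtain ⟨a, m, i, ha₀, haℓ, he₁, he₂, hmi, h₁', h₂'⟩ :=
    exists_support_values_of_two_terms hU hirr h₁ h₂ hsmall hsum
  rcases hmi.lt_or_gt with hlt | hlt
  · obtain ⟨rfl, hfam⟩ := isFamilyParam_of_mul_two_pow_eq (by omega)
      (Nat.add_sub_cancel' haℓ.le) ha₀ (by omega) hd₁ hd₂ hlt h₁' h₂'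
    exact ⟨a, i, hfam, Or.inl ⟨by omega, by omega, he₁⟩⟩
  · obtain ⟨rfl, hfam⟩ := isFamilyParam_of_mul_two_pow_eq (by omega)
      (Nat.sub_add_cancel haℓ.le) (by omega) ha₀ hd₂ hd₁ hlt h₂' h₁'
    refine ⟨_, m, hfam, Or.inr ⟨?_, by omega, he₂⟩⟩
    rw [Nat.sub_sub_self haℓ.le]
    omega

lemma IsSolution.exists_familyParam_isShiftOf {U : ℕ → ℕ} (hn : 7 ≤ n)
    (hU : IsSolution (oddD n) (2 * n - 2) U) (hirr : IrreducibleSol (oddD n) (2 * n - 2) U)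
    (hw : weight (oddD n) U = 2) :
    ∃ a i, IsFamilyParam n a i ∧ IsShiftOf (2 * n - 2) U (familySol (2 * n - 2 - a) a i) := by
  rcases Finset.sum_eq_two_cases hw with ⟨d, hd, hs, hrest⟩ | ⟨p, hp, q, hq, hpq, hsp, hsq, hrest⟩
  · exfalso
    obtain ⟨f₁, f₂, hf, hUd⟩ := exists_eq_two_pow_add_two_pow_of_s2_eq_two hs
    have hf₂ : f₂ < 2 * n - 2 :=
      lt_of_two_pow_le_mersenne (le_add_self.trans (hUd ▸ hU.bounded d))
    obtain ⟨a, i, hfam, h⟩ := exists_familyParam_of_two_terms hn hU hirr hd hd (hf.trans hf₂) hf₂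
      fun k => by
        rw [sum_mul_shift2_iterate_eq_single hd
            (fun c hc hcd => eq_zero_of_s2_eq_zero (hrest c hc hcd)), hUd,
          shift2_iterate_two_pow_add_two_pow (by omega) (hf.trans hf₂) hf₂ hf.ne, mul_add]
    -- the single coordinate would have to be both `2 ^ α - i` and `i * 2 ^ a - 1`
    obtain ⟨hi3, -, hia, -, ha, -⟩ := hfam.bounds hn
    have hne := two_pow_sub_ne_mul_two_pow_sub_one hi3 hia (show a ≤ 2 * n - 2 - a by omega)
    rcases h with h | h <;> exact hne (h.1.symm.trans h.2.1)
  · obtain ⟨f₁, hUp⟩ := exists_eq_two_pow_of_s2_eq_one hsp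
    obtain ⟨f₂, hUq⟩ := exists_eq_two_pow_of_s2_eq_one hsq
    have hf₁ : f₁ < 2 * n - 2 := lt_of_two_pow_le_mersenne (hUp ▸ hU.bounded p)
    have hf₂ : f₂ < 2 * n - 2 := lt_of_two_pow_le_mersenne (hUq ▸ hU.bounded q)
    have hU₀ : ∀ c, c ≠ p → c ≠ q → U c = 0 := fun c hcp hcq => by
      by_cases hc : c ∈ oddD n
      · exact eq_zero_of_s2_eq_zero (hrest c hc hcp hcq)
      · exact hU.supp_sub c hc
    obtain ⟨a, i, hfam, h⟩ := exists_familyParam_of_two_terms hn hU hirr hp hq hf₁ hf₂ fun k => by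
      rw [sum_mul_shift2_iterate_eq_add hp hq hpq (fun c _ => hU₀ c), hUp, hUq,
        shift2_iterate_two_pow (by omega) hf₁, shift2_iterate_two_pow (by omega) hf₂]
    have ha := (hfam.bounds hn).2.2.2.2.1
    rcases h with ⟨rfl, rfl, he⟩ | ⟨rfl, rfl, he⟩
    · exact ⟨a, i, hfam, isShiftOf_sol2 (by omega) hpq hUp hUq hU₀ (by omega) hf₂ he⟩
    · exact ⟨a, i, hfam, isShiftOf_sol2 (by omega) hpq.symm hUq hUp
        (fun c hcq hcp => hU₀ c hcp hcq) (by omega) hf₁ he⟩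

end OddD

/-- For `n` large enough and `D = {i : 1 ≤ i ≤ 2^{n+1} − 3, i odd}`, the irreducible
solutions of weight `2` and length `2n−2` are exactly, up to shift:
`2^{n−3}·(2^{n+1} − i) + 1·(i·2^{n−3} − 1)` for odd `3 ≤ i ≤ 15`;
`2^{n−2}·(2^n − i) + 1·(i·2^{n−2} − 1)` for `i ∈ {3,5,7}`;
`2^{n−1}·(2^{n−1} − 3) + 1·(3·2^{n−1} − 1)`. -/
theorem weight_two_length_2n_sub_two_solutions :
    ∃ N : ℕ, ∀ n : ℕ, N ≤ n →
      (∀ i ∈ ({3, 5, 7, 9, 11, 13, 15} : Finset ℕ),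
        IsSolution (oddD n) (2 * n - 2) (sol2 (2 ^ (n + 1) - i) (2 ^ (n - 3)) (i * 2 ^ (n - 3) - 1) 1) ∧
        IrreducibleSol (oddD n) (2 * n - 2) (sol2 (2 ^ (n + 1) - i) (2 ^ (n - 3)) (i * 2 ^ (n - 3) - 1) 1) ∧
        weight (oddD n) (sol2 (2 ^ (n + 1) - i) (2 ^ (n - 3)) (i * 2 ^ (n - 3) - 1) 1) = 2) ∧
      (∀ i ∈ ({3, 5, 7} : Finset ℕ),
        IsSolution (oddD n) (2 * n - 2) (sol2 (2 ^ n - i) (2 ^ (n - 2)) (i * 2 ^ (n - 2) - 1) 1) ∧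
        IrreducibleSol (oddD n) (2 * n - 2) (sol2 (2 ^ n - i) (2 ^ (n - 2)) (i * 2 ^ (n - 2) - 1) 1) ∧
        weight (oddD n) (sol2 (2 ^ n - i) (2 ^ (n - 2)) (i * 2 ^ (n - 2) - 1) 1) = 2) ∧
      (IsSolution (oddD n) (2 * n - 2) (sol2 (2 ^ (n - 1) - 3) (2 ^ (n - 1)) (3 * 2 ^ (n - 1) - 1) 1) ∧
        IrreducibleSol (oddD n) (2 * n - 2) (sol2 (2 ^ (n - 1) - 3) (2 ^ (n - 1)) (3 * 2 ^ (n - 1) - 1) 1) ∧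
        weight (oddD n) (sol2 (2 ^ (n - 1) - 3) (2 ^ (n - 1)) (3 * 2 ^ (n - 1) - 1) 1) = 2) ∧
      (∀ U, IsSolution (oddD n) (2 * n - 2) U → IrreducibleSol (oddD n) (2 * n - 2) U →
        weight (oddD n) U = 2 →
        (∃ i ∈ ({3, 5, 7, 9, 11, 13, 15} : Finset ℕ),
          IsShiftOf (2 * n - 2) U (sol2 (2 ^ (n + 1) - i) (2 ^ (n - 3)) (i * 2 ^ (n - 3) - 1) 1)) ∨
        (∃ i ∈ ({3, 5, 7} : Finset ℕ),
          IsShiftOf (2 * n - 2) U (sol2 (2 ^ n - i) (2 ^ (n - 2)) (i * 2 ^ (n - 2) - 1) 1)) ∨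
        IsShiftOf (2 * n - 2) U (sol2 (2 ^ (n - 1) - 3) (2 ^ (n - 1)) (3 * 2 ^ (n - 1) - 1) 1)) := by
  refine ⟨7, fun n hn => ⟨fun i hi => ?_, fun i hi => ?_, ?_, fun U hU hirr hw => ?_⟩⟩
  · exact IsFamilyParam.familySol_spec hn (by omega) (Or.inl ⟨rfl, hi⟩)
  · exact IsFamilyParam.familySol_spec hn (by omega) (Or.inr (Or.inl ⟨rfl, hi⟩))
  · exact IsFamilyParam.familySol_spec hn (by omega) (Or.inr (Or.inr ⟨rfl, rfl⟩))
  obtain ⟨a, i, hfam, hshift⟩ := hU.exists_familyParam_isShiftOf hn hirr hw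
  rcases hfam with ⟨rfl, hi⟩ | ⟨rfl, hi⟩ | ⟨rfl, rfl⟩
  · rw [show 2 * n - 2 - (n - 3) = n + 1 by omega] at hshift
    exact Or.inl ⟨i, hi, hshift⟩
  · rw [show 2 * n - 2 - (n - 2) = n by omega] at hshift
    exact Or.inr (Or.inl ⟨i, hi, hshift⟩)
  · rw [show 2 * n - 2 - (n - 1) = n - 1 by omega] at hshift
    exact Or.inr (Or.inr hshift)
end
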